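/- arXiv:2602.10314 — 7 statements merged into one kernel-verified Lean document; each statement's English description precedes it below -/
import Mathlib

section
/- Fix an integer K ≥ 1 and the time grid t_j := 1 − j/K for j = 0,…,K. Let g be an unmasking policy: for each z ∈ Z with at least one masked position and each j, g(· | z, t_j) is a probability distribution on the masked positions of z. Consider two Markov chains on Z, both initialized at the fully masked sequence (m,…,m). (Idealized inference chain) Given state z at step j, sample an index I ~ g(· | z, t_j), sample a token V ~ p(x0^I = · | z) from the ground-truth unmasking posterior, and pass to the state obtained from z by replacing position I with V; let q_{t_j} denote the law of the state at step j. (Teacher-forced chain) First sample x0 ~ p_data; given state z at step j, sample I ~ g(· | z, t_j) and pass to the state obtained from z by replacing position I with x0^I; let q̃_{t_j} denote the marginal law of the state at step j after averaging over x0 ~ p_data. Then q_{t_j} = q̃_{t_j} for every j ∈ {0,1,…,K}. (States z for which the agreement event has p_data-probability zero are never reached by either chain, so the arbitrary choice of posterior at such z is immaterial.) -/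
open Finset

/-- Partially masked sequences of length `L`: `none` plays the role of the mask symbol `m`. -/
abbrev MSeq (V : Type*) (L : ℕ) := Fin L → Option V

/-- Clean sequences of length `L`. -/
abbrev CSeq (V : Type*) (L : ℕ) := Fin L → V

/-- `x` agrees with `z` on the unmasked positions of `z`. -/
def agrees {V : Type*} {L : ℕ} (x : CSeq V L) (z : MSeq V L) : Prop :=
  ∀ i, z i = none ∨ z i = some (x i)

instance {V : Type*} [DecidableEq V] {L : ℕ} (x : CSeq V L) (z : MSeq V L) :
    Decidable (agrees x z) :=
  inferInstanceAs (Decidable (∀ i, z i = none ∨ z i = some (x i)))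

/-- Total `pdata`-mass of the clean sequences that agree with `z`. -/
noncomputable def agreeMass {V : Type*} [Fintype V] [DecidableEq V] {L : ℕ}
    (pdata : CSeq V L → ℝ) (z : MSeq V L) : ℝ :=
  ∑ x : CSeq V L, pdata x * (if agrees x z then 1 else 0)

/-- One-step transition kernel of the idealized inference chain: if `z` has a masked
position, sample a masked index `i ~ g(·|z)` and a token `v ~ post(z, i, ·)` and replace
position `i` of `z` by `v`; a fully unmasked state stays put. -/
noncomputable def idealKernel {V : Type*} [Fintype V] [DecidableEq V] {L : ℕ}
    (g : MSeq V L → Fin L → ℝ) (post : MSeq V L → Fin L → V → ℝ)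
    (z z' : MSeq V L) : ℝ :=
  if ∃ i, z i = none then
    ∑ i : Fin L, ∑ v : V,
      (if z i = none ∧ z' = Function.update z i (some v) then g z i * post z i v else 0)
  else if z' = z then 1 else 0

/-- Law at step `j` of the idealized inference chain started at the fully masked sequence,
where the policy at step `j` uses time `tg j`. -/
noncomputable def idealChain {V : Type*} [Fintype V] [DecidableEq V] {L : ℕ}
    (g : MSeq V L → ℝ → Fin L → ℝ) (post : MSeq V L → Fin L → V → ℝ)
    (tg : ℕ → ℝ) : ℕ → MSeq V L → ℝ
  | 0 => fun z => if z = (fun _ => none) then 1 else 0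
  | j + 1 => fun z' => ∑ z : MSeq V L,
      idealChain g post tg j z * idealKernel (fun z'' => g z'' (tg j)) post z z'

/-- One-step transition kernel of the teacher-forced chain conditioned on the clean
sequence `x`: sample a masked index `i ~ g(·|z)` and replace position `i` of `z` by
`x i`; a fully unmasked state stays put. -/
noncomputable def tfKernel {V : Type*} [Fintype V] [DecidableEq V] {L : ℕ}
    (g : MSeq V L → Fin L → ℝ) (x : CSeq V L) (z z' : MSeq V L) : ℝ :=
  if ∃ i, z i = none then
    ∑ i : Fin L, (if z i = none ∧ z' = Function.update z i (some (x i)) then g z i else 0)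
  else if z' = z then 1 else 0

/-- Law at step `j` of the teacher-forced chain conditioned on `x0 = x`, started at the
fully masked sequence. -/
noncomputable def tfChain {V : Type*} [Fintype V] [DecidableEq V] {L : ℕ}
    (g : MSeq V L → ℝ → Fin L → ℝ) (tg : ℕ → ℝ) (x : CSeq V L) : ℕ → MSeq V L → ℝ
  | 0 => fun z => if z = (fun _ => none) then 1 else 0
  | j + 1 => fun z' => ∑ z : MSeq V L,
      tfChain g tg x j z * tfKernel (fun z'' => g z'' (tg j)) x z z'

section AuxPuma

variable {V : Type*} [Fintype V] [DecidableEq V] {L : ℕ}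

lemma agrees_update_iff {x : CSeq V L} {z : MSeq V L} {i : Fin L} (hzi : z i = none) (v : V) :
    agrees x (Function.update z i (some v)) ↔ agrees x z ∧ x i = v := by
  constructor
  · intro h
    constructor
    · intro j
      by_cases hj : j = i
      · subst hj; exact Or.inl hzi
      · have := h j
        rwa [Function.update_of_ne hj] at this
    · have := h i
      rw [Function.update_self] at this
      rcases this with h1 | h1
      · exact absurd h1 (by simp)
      · exact (Option.some_inj.1 h1).symm
  · rintro ⟨h, hv⟩ j
    by_cases hj : j = i
    · subst hj; right; rw [Function.update_self, hv]
    · rw [Function.update_of_ne hj]; exact h j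

lemma tf_zero (g : MSeq V L → ℝ → Fin L → ℝ) (tg : ℕ → ℝ) :
    ∀ (j : ℕ) (x : CSeq V L) (z : MSeq V L), ¬ agrees x z → tfChain g tg x j z = 0
  | 0, x, z, h => by
      simp only [tfChain]
      rw [if_neg]
      rintro rfl
      exact h (fun i => Or.inl rfl)
  | j+1, x, z', h => by
      simp only [tfChain]
      refine Finset.sum_eq_zero fun z _ => ?_
      unfold tfKernel
      by_cases hz : ∃ i, z i = none
      · rw [if_pos hz, Finset.mul_sum]
        refine Finset.sum_eq_zero fun i _ => ?_
        by_cases hc : z i = none ∧ z' = Function.update z i (some (x i))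
        · rw [if_pos hc]
          have hnz : ¬ agrees x z := by
            intro ha
            exact h (hc.2 ▸ (agrees_update_iff hc.1 (x i)).2 ⟨ha, rfl⟩)
          rw [tf_zero g tg j x z hnz, zero_mul]
        · rw [if_neg hc, mul_zero]
      · rw [if_neg hz]
        by_cases hzz : z' = z
        · rw [if_pos hzz, tf_zero g tg j x z (hzz ▸ h), zero_mul]
        · rw [if_neg hzz, mul_zero]

lemma tf_eq (g : MSeq V L → ℝ → Fin L → ℝ) (tg : ℕ → ℝ) :
    ∀ (j : ℕ) (x x' : CSeq V L) (z : MSeq V L), agrees x z → agrees x' z →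
      tfChain g tg x j z = tfChain g tg x' j z
  | 0, _, _, _, _, _ => rfl
  | j+1, x, x', z', hx, hx' => by
      simp only [tfChain]
      refine Finset.sum_congr rfl fun z _ => ?_
      unfold tfKernel
      by_cases hz : ∃ i, z i = none
      · rw [if_pos hz, if_pos hz, Finset.mul_sum, Finset.mul_sum]
        refine Finset.sum_congr rfl fun i _ => ?_
        by_cases hzi : z i = none
        · by_cases hc : z' = Function.update z i (some (x i))
          · have hxz' : agrees x (Function.update z i (some (x i))) := hc ▸ hx
            have hx'z' : agrees x' (Function.update z i (some (x i))) := hc ▸ hx'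
            obtain ⟨hxz, -⟩ := (agrees_update_iff hzi (x i)).1 hxz'
            obtain ⟨hx'z, hvi⟩ := (agrees_update_iff hzi (x i)).1 hx'z'
            rw [if_pos ⟨hzi, hc⟩, if_pos ⟨hzi, by rw [hvi]; exact hc⟩,
                tf_eq g tg j x x' z hxz hx'z]
          · have hc' : ¬ z' = Function.update z i (some (x' i)) := by
              intro h
              apply hc
              have h1 := hx i
              rw [h, Function.update_self] at h1
              rcases h1 with h1 | h1
              · exact absurd h1 (by simp)
              · rw [h, Option.some_inj.1 h1]
            rw [if_neg (fun h => hc h.2), if_neg (fun h => hc' h.2), mul_zero, mul_zero]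
        · rw [if_neg (fun h => hzi h.1), if_neg (fun h => hzi h.1), mul_zero, mul_zero]
      · rw [if_neg hz, if_neg hz]
        by_cases hzz : z' = z
        · rw [if_pos hzz]
          subst hzz
          rw [tf_eq g tg j x x' z' hx hx']
        · rw [if_neg hzz, mul_zero, mul_zero]

noncomputable def fill [Nonempty V] (z : MSeq V L) : CSeq V L :=
  fun i => (z i).getD (Classical.arbitrary V)

lemma agrees_fill [Nonempty V] (z : MSeq V L) : agrees (fill z) z := by
  intro i
  cases h : z i with
  | none => exact Or.inl rfl
  | some v => right; simp [fill, h]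

lemma tf_rep [Nonempty V] (g : MSeq V L → ℝ → Fin L → ℝ) (tg : ℕ → ℝ)
    (j : ℕ) (x : CSeq V L) (z : MSeq V L) :
    tfChain g tg x j z = if agrees x z then tfChain g tg (fill z) j z else 0 := by
  by_cases h : agrees x z
  · rw [if_pos h]; exact tf_eq g tg j x (fill z) z h (agrees_fill z)
  · rw [if_neg h]; exact tf_zero g tg j x z h

end AuxPuma

/-- **marginal agreement.** For every step `j ∈ {0,…,K}`, the marginal law of
the teacher-forced chain (after averaging over `x0 ~ p_data`) coincides with the law of
the idealized inference chain that unmasks with the ground-truth posterior, provided both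
use the same unmasking policy `g` on the time grid `t_j = 1 - j/K`. The posterior `post`
is pinned down only at states of positive agreement mass; elsewhere it is arbitrary. -/
theorem puma_marginal_agreement
    {V : Type*} [Fintype V] [DecidableEq V] [Nonempty V] {L K : ℕ}
    (hL : 0 < L) (hK : 1 ≤ K)
    (pdata : CSeq V L → ℝ) (hp0 : ∀ x, 0 ≤ pdata x) (hp1 : (∑ x : CSeq V L, pdata x) = 1)
    (g : MSeq V L → ℝ → Fin L → ℝ)
    (hg : ∀ z : MSeq V L, (∃ i, z i = none) → ∀ j : ℕ, j ≤ K →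
      (∀ i, 0 ≤ g z (1 - (j : ℝ) / (K : ℝ)) i) ∧
      (∀ i, z i ≠ none → g z (1 - (j : ℝ) / (K : ℝ)) i = 0) ∧
      (∑ i : Fin L, g z (1 - (j : ℝ) / (K : ℝ)) i) = 1)
    (post : MSeq V L → Fin L → V → ℝ)
    (hpost : ∀ (z : MSeq V L) (i : Fin L) (v : V), z i = none → 0 < agreeMass pdata z →
      post z i v =
        (∑ x : CSeq V L, pdata x * (if agrees x z ∧ x i = v then 1 else 0))
          / agreeMass pdata z) :
    ∀ j : ℕ, j ≤ K → ∀ z : MSeq V L,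
      (∑ x : CSeq V L, pdata x * tfChain g (fun j' => 1 - (j' : ℝ) / (K : ℝ)) x j z)
        = idealChain g post (fun j' => 1 - (j' : ℝ) / (K : ℝ)) j z := by
  set t : ℕ → ℝ := fun j' => 1 - (j' : ℝ) / (K : ℝ) with ht
  have main : ∀ j : ℕ, ∀ z : MSeq V L,
      (∑ x : CSeq V L, pdata x * tfChain g t x j z) = idealChain g post t j z := by
    intro j
    induction j with
    | zero =>
        intro z
        simp only [tfChain, idealChain]
        by_cases hz : z = fun _ => none
        · rw [if_pos hz]
          simp only [if_pos hz, mul_one]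
          exact hp1
        · simp [if_neg hz]
    | succ j ih =>
        -- key pointwise identity
        have key : ∀ (z : MSeq V L) (i : Fin L) (v : V), z i = none →
            (∑ x : CSeq V L, pdata x * tfChain g t x j z * (if x i = v then (1:ℝ) else 0))
              = idealChain g post t j z * post z i v := by
          intro z i v hzi
          have hWA : (∑ x : CSeq V L, pdata x * tfChain g t x j z)
              = tfChain g t (fill z) j z * agreeMass pdata z := by
            unfold agreeMass
            rw [Finset.mul_sum]
            refine Finset.sum_congr rfl fun x _ => ?_
            rw [tf_rep]
            split_ifs <;> ring
          have hLN : (∑ x : CSeq V L, pdata x * tfChain g t x j z * (if x i = v then (1:ℝ) else 0))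
              = tfChain g t (fill z) j z *
                  (∑ x : CSeq V L, pdata x * (if agrees x z ∧ x i = v then (1:ℝ) else 0)) := by
            rw [Finset.mul_sum]
            refine Finset.sum_congr rfl fun x _ => ?_
            rw [tf_rep]
            by_cases h1 : agrees x z <;> by_cases h2 : x i = v <;>
              simp [h1, h2] <;> ring
          rw [hLN, ← ih z, hWA]
          by_cases hm : 0 < agreeMass pdata z
          · rw [hpost z i v hzi hm]
            have hne : agreeMass pdata z ≠ 0 := ne_of_gt hm
            field_simp
          · have hnn : 0 ≤ agreeMass pdata z :=
              Finset.sum_nonneg fun x _ =>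
                mul_nonneg (hp0 x) (by split_ifs <;> norm_num)
            have h0 : agreeMass pdata z = 0 := le_antisymm (not_lt.mp hm) hnn
            have hN0 : (∑ x : CSeq V L, pdata x * (if agrees x z ∧ x i = v then (1:ℝ) else 0)) = 0 := by
              refine le_antisymm ?_ (Finset.sum_nonneg fun x _ =>
                mul_nonneg (hp0 x) (by split_ifs <;> norm_num))
              calc (∑ x : CSeq V L, pdata x * (if agrees x z ∧ x i = v then (1:ℝ) else 0))
                  ≤ ∑ x : CSeq V L, pdata x * (if agrees x z then (1:ℝ) else 0) := by
                    refine Finset.sum_le_sum fun x _ => ?_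
                    refine mul_le_mul_of_nonneg_left ?_ (hp0 x)
                    split_ifs with h1 h2
                    · exact le_rfl
                    · exact absurd h1.1 h2
                    · norm_num
                    · exact le_rfl
                _ = 0 := h0
            rw [hN0, h0]
            ring
        intro z'
        simp only [tfChain, idealChain]
        simp_rw [Finset.mul_sum]
        rw [Finset.sum_comm]
        refine Finset.sum_congr rfl fun z _ => ?_
        unfold tfKernel idealKernel
        by_cases hz : ∃ i, z i = none
        · simp only [if_pos hz]
          simp_rw [Finset.mul_sum]
          rw [Finset.sum_comm]
          refine Finset.sum_congr rfl fun i _ => ?_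
          by_cases hzi : z i = none
          · simp only [hzi, eq_self_iff_true, true_and]
            have hsplit : ∀ x : CSeq V L,
                (if z' = Function.update z i (some (x i)) then g z (t j) i else 0)
                  = ∑ v : V, (if x i = v then (1:ℝ) else 0) *
                      (if z' = Function.update z i (some v) then g z (t j) i else 0) := by
              intro x
              rw [Finset.sum_eq_single (x i)]
              · simp
              · intro v _ hv
                rw [if_neg (fun h => hv h.symm), zero_mul]
              · intro h
                exact absurd (Finset.mem_univ _) h
            simp_rw [hsplit, Finset.mul_sum]
            rw [Finset.sum_comm]
            refine Finset.sum_congr rfl fun v _ => ?_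
            have hstep : (∑ x : CSeq V L, pdata x * (tfChain g t x j z *
                ((if x i = v then (1:ℝ) else 0) *
                  (if z' = Function.update z i (some v) then g z (t j) i else 0))))
                = (∑ x : CSeq V L, pdata x * tfChain g t x j z * (if x i = v then (1:ℝ) else 0)) *
                    (if z' = Function.update z i (some v) then g z (t j) i else 0) := by
              rw [Finset.sum_mul]
              refine Finset.sum_congr rfl fun x _ => ?_
              ring
            rw [hstep, key z i v hzi]
            split_ifs <;> ring
          · simp [hzi]
        · simp only [if_neg hz]
          by_cases hzz : z' = z
          · simp only [if_pos hzz, mul_one]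
            exact ih z
          · simp only [if_neg hzz, mul_zero]
            simp
  intro j _ z
  exact main j z
end

section
/- Let p_data be a probability distribution on V^L, let T be a finite nonempty set of times with a probability distribution ν on T satisfying t > 0 for all t in the support of ν, and for each t ∈ T let κ_t be a Markov kernel from V^L to Z of the non-leaky form κ_t(z | x) = α_t(z) · 1{x agrees with z} for some α_t : Z → [0,∞). Sample x0 ~ p_data, t ~ ν independently, and x_t ~ κ_t(· | x0), and for a family f of probability distributions f^i(·|z) on V indexed by positions i and states z ∈ Z, define the training loss L(f) := E[(1/t) · Σ_{i : x_t^i = m} (−log f^i(x0^i | x_t))] (with −log 0 = +∞). Then the ground-truth unmasking posterior f*^i(v|z) := p(x0^i = v | z) minimizes L over all such families, and any minimizer f satisfies f^i(·|z) = p(x0^i = · | z) for every pair (i, z) such that with positive probability x_t = z and position i is masked in z. -/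
open Finset
open scoped ENNReal

/-- `negLog r` is `-log r` with the convention `-log 0 = +∞`. -/
noncomputable def negLog (r : ℝ) : ℝ≥0∞ :=
  if r ≤ 0 then ⊤ else ENNReal.ofReal (-Real.log r)

/-- The MDM training loss `E[(1/t) ∑_{i : x_t^i = m} (−log f^i(x0^i | x_t))]` where
`x0 ~ p_data`, `t ~ ν` (independently) and `x_t ~ κ_t(·|x0)` for the non-leaky kernels
`κ_t(z|x) = α_t(z)·1{x agrees with z}`. -/
noncomputable def mdmLoss {T V : Type*} [Fintype T] [Fintype V] [DecidableEq V] {L : ℕ}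
    (ν : T → ℝ) (time : T → ℝ) (pdata : CSeq V L → ℝ) (α : T → MSeq V L → ℝ)
    (f : Fin L → MSeq V L → V → ℝ) : ℝ≥0∞ :=
  ∑ t : T, ∑ x : CSeq V L, ∑ z : MSeq V L,
    ENNReal.ofReal (ν t * pdata x * α t z * (if agrees x z then 1 else 0) / time t) *
      ∑ i : Fin L, (if z i = none then negLog (f i z (x i)) else 0)

/-- A family `f` of probability distributions `f^i(·|z)` on `V`. -/
def IsCondFam {V : Type*} [Fintype V] {L : ℕ} (f : Fin L → MSeq V L → V → ℝ) : Prop :=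
  ∀ (i : Fin L) (z : MSeq V L), (∀ v, 0 ≤ f i z v) ∧ (∑ v : V, f i z v) = 1

-- auxiliary lemmas
section Gibbs
variable {W : Type*} [Fintype W]

lemma real_gibbs_le (c q : W → ℝ) (hc : ∀ v, 0 ≤ c v) (hq0 : ∀ v, 0 ≤ q v)
    (hq1 : ∑ v, q v = 1) (hS : 0 < ∑ w, c w) (hpos : ∀ v, 0 < c v → 0 < q v) :
    ∑ v, c v * (-Real.log (c v / ∑ w, c w)) ≤ ∑ v, c v * (-Real.log (q v)) := by
  set S := ∑ w, c w with hSdef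
  have key : ∀ v, c v * (Real.log (q v) - Real.log (c v / S)) ≤ S * q v - c v := by
    intro v
    rcases eq_or_lt_of_le (hc v) with h0 | h0
    · simp only [← h0, zero_mul, sub_zero]
      exact mul_nonneg hS.le (hq0 v)
    · have hqv := hpos v h0
      have ht : 0 < q v * S / c v := by positivity
      have hlog : Real.log (q v * S / c v) ≤ q v * S / c v - 1 :=
        Real.log_le_sub_one_of_pos ht
      have hrw : Real.log (q v) - Real.log (c v / S) = Real.log (q v * S / c v) := by
        rw [Real.log_div h0.ne' hS.ne', Real.log_div (by positivity) h0.ne',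
          Real.log_mul hqv.ne' hS.ne']
        ring
      rw [hrw]
      have := mul_le_mul_of_nonneg_left hlog (hc v)
      calc c v * Real.log (q v * S / c v) ≤ c v * (q v * S / c v - 1) := this
        _ = S * q v - c v := by field_simp
  have hsum : ∑ v, (S * q v - c v) = 0 := by
    rw [Finset.sum_sub_distrib, ← Finset.mul_sum, hq1, ← hSdef]; ring
  have h1 : ∑ v, c v * (Real.log (q v) - Real.log (c v / S)) ≤ 0 := by
    rw [← hsum]; exact Finset.sum_le_sum fun v _ => key v
  have := Finset.sum_le_sum (fun v (_ : v ∈ univ) => key v)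
  simp only [mul_sub] at h1
  rw [Finset.sum_sub_distrib] at h1
  simp only [mul_neg]
  rw [Finset.sum_neg_distrib, Finset.sum_neg_distrib]
  linarith

lemma real_gibbs_lt (c q : W → ℝ) (hc : ∀ v, 0 ≤ c v) (hq0 : ∀ v, 0 ≤ q v)
    (hq1 : ∑ v, q v = 1) (hS : 0 < ∑ w, c w) (hpos : ∀ v, 0 < c v → 0 < q v)
    (v0 : W) (hv0 : 0 < c v0) (hne : q v0 ≠ c v0 / ∑ w, c w) :
    ∑ v, c v * (-Real.log (c v / ∑ w, c w)) < ∑ v, c v * (-Real.log (q v)) := by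
  set S := ∑ w, c w with hSdef
  have key : ∀ v, c v * (Real.log (q v) - Real.log (c v / S)) ≤ S * q v - c v := by
    intro v
    rcases eq_or_lt_of_le (hc v) with h0 | h0
    · simp only [← h0, zero_mul, sub_zero]
      exact mul_nonneg hS.le (hq0 v)
    · have hqv := hpos v h0
      have ht : 0 < q v * S / c v := by positivity
      have hlog : Real.log (q v * S / c v) ≤ q v * S / c v - 1 :=
        Real.log_le_sub_one_of_pos ht
      have hrw : Real.log (q v) - Real.log (c v / S) = Real.log (q v * S / c v) := by
        rw [Real.log_div h0.ne' hS.ne', Real.log_div (by positivity) h0.ne',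
          Real.log_mul hqv.ne' hS.ne']
        ring
      rw [hrw]
      calc c v * Real.log (q v * S / c v) ≤ c v * (q v * S / c v - 1) :=
            mul_le_mul_of_nonneg_left hlog (hc v)
        _ = S * q v - c v := by field_simp
  have keystrict : c v0 * (Real.log (q v0) - Real.log (c v0 / S)) < S * q v0 - c v0 := by
    have hqv := hpos v0 hv0
    have ht : 0 < q v0 * S / c v0 := by positivity
    have htne : q v0 * S / c v0 ≠ 1 := by
      intro h
      apply hne
      field_simp at h
      field_simp
      linarith
    have hlog : Real.log (q v0 * S / c v0) < q v0 * S / c v0 - 1 :=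
      Real.log_lt_sub_one_of_pos ht htne
    have hrw : Real.log (q v0) - Real.log (c v0 / S) = Real.log (q v0 * S / c v0) := by
      rw [Real.log_div hv0.ne' hS.ne', Real.log_div (by positivity) hv0.ne',
        Real.log_mul hqv.ne' hS.ne']
      ring
    rw [hrw]
    calc c v0 * Real.log (q v0 * S / c v0) < c v0 * (q v0 * S / c v0 - 1) :=
          (mul_lt_mul_iff_right₀ hv0).2 hlog
      _ = S * q v0 - c v0 := by field_simp
  have hsum : ∑ v, (S * q v - c v) = 0 := by
    rw [Finset.sum_sub_distrib, ← Finset.mul_sum, hq1, ← hSdef]; ring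
  have h1 : ∑ v, c v * (Real.log (q v) - Real.log (c v / S)) < 0 := by
    rw [← hsum]
    exact Finset.sum_lt_sum (fun v _ => key v) ⟨v0, Finset.mem_univ v0, keystrict⟩
  simp only [mul_sub] at h1
  rw [Finset.sum_sub_distrib] at h1
  simp only [mul_neg]
  rw [Finset.sum_neg_distrib, Finset.sum_neg_distrib]
  linarith

lemma exists_supp_ne (c q : W → ℝ) (hc : ∀ v, 0 ≤ c v) (hq0 : ∀ v, 0 ≤ q v)
    (hq1 : ∑ v, q v = 1) (hS : 0 < ∑ w, c w)
    (hne : ∃ v, q v ≠ c v / ∑ w, c w) :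
    ∃ v, 0 < c v ∧ q v ≠ c v / ∑ w, c w := by
  classical
  by_contra h
  push_neg at h
  obtain ⟨v, hv⟩ := hne
  have hcv : c v = 0 := by
    by_contra hcv
    exact hv (h v (lt_of_le_of_ne (hc v) (Ne.symm hcv)))
  have hqv : 0 < q v := lt_of_le_of_ne (hq0 v) (by
    intro h'
    exact hv (by rw [← h', hcv, zero_div]))
  -- on the support, q = c / S; summing gives total ≥ 1 + q v > 1
  set s : Finset W := univ.filter (fun w => 0 < c w) with hsdef
  have hvs : v ∉ s := by simp [hsdef, hcv]
  have hsum_s : ∑ w ∈ s, q w = 1 := by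
    have h1 : ∑ w ∈ s, q w = ∑ w ∈ s, c w / (∑ w, c w) := by
      apply Finset.sum_congr rfl
      intro w hw
      exact h w (by simpa [hsdef] using hw)
    have h2 : ∑ w ∈ s, c w = ∑ w, c w :=
      Finset.sum_filter_of_ne (fun w _ hw => lt_of_le_of_ne (hc w) (Ne.symm hw))
    rw [h1, ← Finset.sum_div, h2, div_self hS.ne']
  have hsub : insert v s ⊆ univ := Finset.subset_univ _
  have : ∑ w ∈ insert v s, q w ≤ ∑ w, q w :=
    Finset.sum_le_sum_of_subset_of_nonneg hsub (fun w _ _ => hq0 w)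
  rw [Finset.sum_insert hvs, hsum_s, hq1] at this
  linarith

lemma negLog_of_pos {r : ℝ} (hr : 0 < r) : negLog r = ENNReal.ofReal (-Real.log r) :=
  if_neg (not_le.2 hr)

lemma negLog_of_nonpos {r : ℝ} (hr : r ≤ 0) : negLog r = ⊤ := if_pos hr

lemma term_eq (cv qv : ℝ) (hc : 0 ≤ cv) (h : cv = 0 ∨ 0 < qv) :
    ENNReal.ofReal cv * negLog qv = ENNReal.ofReal (cv * (-Real.log qv)) := by
  rcases h with h | h
  · simp [h]
  · rw [negLog_of_pos h, ← ENNReal.ofReal_mul hc]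

lemma ennreal_gibbs_ne_top (c : W → ℝ) (hc : ∀ v, 0 ≤ c v) :
    ∑ v, ENNReal.ofReal (c v) * negLog (c v / ∑ w, c w) ≠ ⊤ := by
  rw [ENNReal.sum_ne_top]
  intro v _
  rcases eq_or_lt_of_le (hc v) with h0 | h0
  · simp [← h0]
  · rcases le_or_gt (∑ w, c w) 0 with hS | hS
    · exact absurd (Finset.single_le_sum (fun w _ => hc w) (Finset.mem_univ v))
        (by linarith)
    · rw [negLog_of_pos (by positivity)]
      exact ENNReal.mul_ne_top ENNReal.ofReal_ne_top ENNReal.ofReal_ne_top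

lemma sum_term_eq (c q : W → ℝ) (hc : ∀ v, 0 ≤ c v) (hq0 : ∀ v, 0 ≤ q v)
    (hq1 : ∑ v, q v = 1) (hpos : ∀ v, 0 < c v → 0 < q v) :
    ∑ v, ENNReal.ofReal (c v) * negLog (q v)
      = ENNReal.ofReal (∑ v, c v * (-Real.log (q v))) := by
  have hnn : ∀ v ∈ univ, 0 ≤ c v * (-Real.log (q v)) := by
    intro v _
    rcases eq_or_lt_of_le (hc v) with h0 | h0
    · simp [← h0]
    · have hq : q v ≤ 1 := hq1 ▸ Finset.single_le_sum (fun w _ => hq0 w) (Finset.mem_univ v)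
      have : Real.log (q v) ≤ 0 := Real.log_nonpos (hq0 v) hq
      exact mul_nonneg (hc v) (by linarith)
  rw [ENNReal.ofReal_sum_of_nonneg hnn]
  apply Finset.sum_congr rfl
  intro v _
  refine term_eq _ _ (hc v) ?_
  rcases eq_or_lt_of_le (hc v) with h0 | h0
  · exact Or.inl h0.symm
  · exact Or.inr (hpos v h0)

lemma ennreal_gibbs_le (c q : W → ℝ) (hc : ∀ v, 0 ≤ c v) (hq0 : ∀ v, 0 ≤ q v)
    (hq1 : ∑ v, q v = 1) :
    ∑ v, ENNReal.ofReal (c v) * negLog (c v / ∑ w, c w)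
      ≤ ∑ v, ENNReal.ofReal (c v) * negLog (q v) := by
  have hS0 : 0 ≤ ∑ w, c w := Finset.sum_nonneg fun w _ => hc w
  rcases eq_or_lt_of_le hS0 with hS | hS
  · have hall : ∀ v, c v = 0 := by
      intro v
      have := (Finset.sum_eq_zero_iff_of_nonneg (fun w _ => hc w)).1 hS.symm
      exact this v (Finset.mem_univ v)
    simp [hall]
  · by_cases hqp : ∀ v, 0 < c v → 0 < q v
    · -- both sides real
      have hp0 : ∀ v, 0 ≤ c v / ∑ w, c w := fun v => div_nonneg (hc v) hS0
      have hp1 : ∑ v, c v / ∑ w, c w = 1 := by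
        rw [← Finset.sum_div, div_self hS.ne']
      have hpp : ∀ v, 0 < c v → 0 < c v / ∑ w, c w := fun v hv => div_pos hv hS
      rw [sum_term_eq c _ hc hp0 hp1 hpp, sum_term_eq c q hc hq0 hq1 hqp]
      exact ENNReal.ofReal_le_ofReal (real_gibbs_le c q hc hq0 hq1 hS hqp)
    · push_neg at hqp
      obtain ⟨v0, hv0, hq0'⟩ := hqp
      have hqz : q v0 ≤ 0 := hq0'
      have : ENNReal.ofReal (c v0) * negLog (q v0) = ⊤ := by
        rw [negLog_of_nonpos hqz, ENNReal.mul_top]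
        simp [ENNReal.ofReal_eq_zero, not_le.2 hv0]
      have htop : ∑ v, ENNReal.ofReal (c v) * negLog (q v) = ⊤ :=
        ENNReal.sum_eq_top.2 ⟨v0, Finset.mem_univ v0, this⟩
      rw [htop]
      exact le_top

lemma ennreal_gibbs_lt (c q : W → ℝ) (hc : ∀ v, 0 ≤ c v) (hq0 : ∀ v, 0 ≤ q v)
    (hq1 : ∑ v, q v = 1) (hS : 0 < ∑ w, c w)
    (hne : ∃ v, q v ≠ c v / ∑ w, c w) :
    ∑ v, ENNReal.ofReal (c v) * negLog (c v / ∑ w, c w)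
      < ∑ v, ENNReal.ofReal (c v) * negLog (q v) := by
  have hS0 : 0 ≤ ∑ w, c w := hS.le
  by_cases hqp : ∀ v, 0 < c v → 0 < q v
  · obtain ⟨v0, hv0c, hv0ne⟩ := exists_supp_ne c q hc hq0 hq1 hS hne
    have hp0 : ∀ v, 0 ≤ c v / ∑ w, c w := fun v => div_nonneg (hc v) hS0
    have hp1 : ∑ v, c v / ∑ w, c w = 1 := by
      rw [← Finset.sum_div, div_self hS.ne']
    have hpp : ∀ v, 0 < c v → 0 < c v / ∑ w, c w := fun v hv => div_pos hv hS
    rw [sum_term_eq c _ hc hp0 hp1 hpp, sum_term_eq c q hc hq0 hq1 hqp]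
    have hnn : 0 ≤ ∑ v, c v * (-Real.log (c v / ∑ w, c w)) := by
      apply Finset.sum_nonneg
      intro v _
      rcases eq_or_lt_of_le (hc v) with h0 | h0
      · simp [← h0]
      · have hle : c v / ∑ w, c w ≤ 1 := by
          rw [div_le_one hS]
          exact Finset.single_le_sum (fun w _ => hc w) (Finset.mem_univ v)
        have : Real.log (c v / ∑ w, c w) ≤ 0 := Real.log_nonpos (hp0 v) hle
        exact mul_nonneg (hc v) (by linarith)
    exact (ENNReal.ofReal_lt_ofReal_iff_of_nonneg hnn).2
      (real_gibbs_lt c q hc hq0 hq1 hS hqp v0 hv0c hv0ne)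
  · push_neg at hqp
    obtain ⟨v0, hv0, hq0'⟩ := hqp
    have hqz : q v0 ≤ 0 := hq0'
    have : ENNReal.ofReal (c v0) * negLog (q v0) = ⊤ := by
      rw [negLog_of_nonpos hqz, ENNReal.mul_top]
      simp [ENNReal.ofReal_eq_zero, not_le.2 hv0]
    have htop : ∑ v, ENNReal.ofReal (c v) * negLog (q v) = ⊤ :=
      ENNReal.sum_eq_top.2 ⟨v0, Finset.mem_univ v0, this⟩
    rw [htop]
    exact (ennreal_gibbs_ne_top c hc).lt_top

end Gibbs

noncomputable def condMass {V : Type*} [Fintype V] [DecidableEq V] {L : ℕ}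
    (pdata : CSeq V L → ℝ) (z : MSeq V L) (i : Fin L) (v : V) : ℝ :=
  ∑ x : CSeq V L, pdata x * (if agrees x z ∧ x i = v then 1 else 0)

section Decomp
variable {T V : Type*} [Fintype T] [Fintype V] [DecidableEq V] {L : ℕ}

lemma condMass_nonneg (pdata : CSeq V L → ℝ) (hp0 : ∀ x, 0 ≤ pdata x)
    (z : MSeq V L) (i : Fin L) (v : V) : 0 ≤ condMass pdata z i v :=
  Finset.sum_nonneg fun x _ => mul_nonneg (hp0 x) (by positivity)

lemma sum_condMass (pdata : CSeq V L → ℝ) (z : MSeq V L) (i : Fin L) :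
    ∑ v : V, condMass pdata z i v = agreeMass pdata z := by
  unfold condMass agreeMass
  rw [Finset.sum_comm]
  apply Finset.sum_congr rfl
  intro x _
  rw [← Finset.mul_sum]
  congr 1
  by_cases h : agrees x z
  · simp [h]
  · simp [h]

lemma sum_fiber (pdata : CSeq V L → ℝ) (hp0 : ∀ x, 0 ≤ pdata x)
    (z : MSeq V L) (i : Fin L) (g : V → ℝ≥0∞) :
    ∑ x : CSeq V L, ENNReal.ofReal (pdata x * (if agrees x z then 1 else 0)) * g (x i)
      = ∑ v : V, ENNReal.ofReal (condMass pdata z i v) * g v := by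
  have hr : ∀ v : V, ENNReal.ofReal (condMass pdata z i v)
      = ∑ x : CSeq V L, ENNReal.ofReal (pdata x * (if agrees x z ∧ x i = v then 1 else 0)) := by
    intro v
    exact ENNReal.ofReal_sum_of_nonneg fun x _ => mul_nonneg (hp0 x) (by positivity)
  simp only [hr, Finset.sum_mul]
  rw [Finset.sum_comm]
  apply Finset.sum_congr rfl
  intro x _
  rw [Finset.sum_eq_single (x i)]
  · congr 2
    simp
  · intro b _ hb
    rw [if_neg (by rintro ⟨-, h'⟩; exact hb h'.symm)]
    simp
  · simp

set_option maxHeartbeats 1000000 in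
lemma mdmLoss_decomp
    (ν : T → ℝ) (time : T → ℝ) (pdata : CSeq V L → ℝ) (α : T → MSeq V L → ℝ)
    (hν0 : ∀ t, 0 ≤ ν t) (hp0 : ∀ x, 0 ≤ pdata x) (hα0 : ∀ t z, 0 ≤ α t z)
    (htime : ∀ t, 0 < ν t → 0 < time t)
    (f : Fin L → MSeq V L → V → ℝ) :
    mdmLoss ν time pdata α f
      = ∑ z : MSeq V L, (∑ t : T, ENNReal.ofReal (ν t * α t z / time t)) *
          ∑ i : Fin L, (if z i = none then
            ∑ v : V, ENNReal.ofReal (condMass pdata z i v) * negLog (f i z v) else 0) := by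
  unfold mdmLoss
  have hsplit : ∀ (t : T) (x : CSeq V L) (z : MSeq V L),
      ENNReal.ofReal (ν t * pdata x * α t z * (if agrees x z then 1 else 0) / time t)
        = ENNReal.ofReal (ν t * α t z / time t)
            * ENNReal.ofReal (pdata x * (if agrees x z then 1 else 0)) := by
    intro t x z
    have hnn : 0 ≤ ν t * α t z / time t := by
      rcases eq_or_lt_of_le (hν0 t) with h | h
      · simp [← h]
      · exact div_nonneg (mul_nonneg (hν0 t) (hα0 t z)) (htime t h).le
    rw [← ENNReal.ofReal_mul hnn]
    congr 1
    ring
  have hinner : ∀ z : MSeq V L,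
      (∑ x : CSeq V L, ENNReal.ofReal (pdata x * (if agrees x z then 1 else 0)) *
        ∑ i : Fin L, (if z i = none then negLog (f i z (x i)) else 0))
      = ∑ i : Fin L, (if z i = none then
          ∑ v : V, ENNReal.ofReal (condMass pdata z i v) * negLog (f i z v) else 0) := by
    intro z
    simp only [Finset.mul_sum]
    rw [Finset.sum_comm]
    apply Finset.sum_congr rfl
    intro i _
    by_cases hzi : z i = none
    · simp only [if_pos hzi]
      exact sum_fiber pdata hp0 z i (fun v => negLog (f i z v))
    · simp [hzi]
  simp only [hsplit]
  simp only [mul_assoc]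
  calc (∑ t : T, ∑ x : CSeq V L, ∑ z : MSeq V L,
          ENNReal.ofReal (ν t * α t z / time t) *
            (ENNReal.ofReal (pdata x * (if agrees x z then 1 else 0)) *
              ∑ i : Fin L, (if z i = none then negLog (f i z (x i)) else 0)))
      = ∑ t : T, ∑ z : MSeq V L, ∑ x : CSeq V L,
          ENNReal.ofReal (ν t * α t z / time t) *
            (ENNReal.ofReal (pdata x * (if agrees x z then 1 else 0)) *
              ∑ i : Fin L, (if z i = none then negLog (f i z (x i)) else 0)) :=
        Finset.sum_congr rfl (fun t _ => Finset.sum_comm)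
    _ = ∑ z : MSeq V L, ∑ t : T, ∑ x : CSeq V L,
          ENNReal.ofReal (ν t * α t z / time t) *
            (ENNReal.ofReal (pdata x * (if agrees x z then 1 else 0)) *
              ∑ i : Fin L, (if z i = none then negLog (f i z (x i)) else 0)) :=
        Finset.sum_comm
    _ = ∑ z : MSeq V L, (∑ t : T, ENNReal.ofReal (ν t * α t z / time t)) *
          ∑ i : Fin L, (if z i = none then
            ∑ v : V, ENNReal.ofReal (condMass pdata z i v) * negLog (f i z v) else 0) := by
        apply Finset.sum_congr rfl
        intro z _
        rw [Finset.sum_mul]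
        apply Finset.sum_congr rfl
        intro t _
        rw [← Finset.mul_sum, hinner z]

end Decomp

section Helpers
variable {V : Type*} [Fintype V] [DecidableEq V] {L : ℕ}

lemma inner_star_le (pdata : CSeq V L → ℝ) (hp0 : ∀ x, 0 ≤ pdata x)
    (z : MSeq V L) (i : Fin L) (fs : V → ℝ)
    (hfs : 0 < agreeMass pdata z → ∀ v, fs v = condMass pdata z i v / agreeMass pdata z)
    (q : V → ℝ) (hq0 : ∀ v, 0 ≤ q v) (hq1 : ∑ v, q v = 1) :
    ∑ v, ENNReal.ofReal (condMass pdata z i v) * negLog (fs v)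
      ≤ ∑ v, ENNReal.ofReal (condMass pdata z i v) * negLog (q v) := by
  have hc : ∀ v, 0 ≤ condMass pdata z i v := condMass_nonneg pdata hp0 z i
  have hSsum : ∑ w, condMass pdata z i w = agreeMass pdata z := sum_condMass pdata z i
  have hS0 : 0 ≤ agreeMass pdata z := hSsum ▸ Finset.sum_nonneg fun w _ => hc w
  rcases eq_or_lt_of_le hS0 with hS | hS
  · have hall : ∀ v ∈ (univ : Finset V), condMass pdata z i v = 0 :=
      (Finset.sum_eq_zero_iff_of_nonneg (fun w _ => hc w)).1 (hSsum.trans hS.symm)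
    have : ∀ v ∈ (univ : Finset V),
        ENNReal.ofReal (condMass pdata z i v) * negLog (fs v) = 0 := by
      intro v hv; rw [hall v hv]; simp
    rw [Finset.sum_congr rfl this]
    simp
  · have hlhs : ∀ v ∈ (univ : Finset V),
        ENNReal.ofReal (condMass pdata z i v) * negLog (fs v)
          = ENNReal.ofReal (condMass pdata z i v) *
              negLog (condMass pdata z i v / ∑ w, condMass pdata z i w) := by
      intro v _; rw [hfs hS v, hSsum]
    rw [Finset.sum_congr rfl hlhs]
    exact ennreal_gibbs_le _ q hc hq0 hq1

lemma inner_star_ne_top (pdata : CSeq V L → ℝ) (hp0 : ∀ x, 0 ≤ pdata x)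
    (z : MSeq V L) (i : Fin L) (fs : V → ℝ)
    (hfs : 0 < agreeMass pdata z → ∀ v, fs v = condMass pdata z i v / agreeMass pdata z) :
    ∑ v, ENNReal.ofReal (condMass pdata z i v) * negLog (fs v) ≠ ⊤ := by
  have hc : ∀ v, 0 ≤ condMass pdata z i v := condMass_nonneg pdata hp0 z i
  have hSsum : ∑ w, condMass pdata z i w = agreeMass pdata z := sum_condMass pdata z i
  have hS0 : 0 ≤ agreeMass pdata z := hSsum ▸ Finset.sum_nonneg fun w _ => hc w
  rcases eq_or_lt_of_le hS0 with hS | hS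
  · have hall : ∀ v ∈ (univ : Finset V), condMass pdata z i v = 0 :=
      (Finset.sum_eq_zero_iff_of_nonneg (fun w _ => hc w)).1 (hSsum.trans hS.symm)
    have : ∀ v ∈ (univ : Finset V),
        ENNReal.ofReal (condMass pdata z i v) * negLog (fs v) = 0 := by
      intro v hv; rw [hall v hv]; simp
    rw [Finset.sum_congr rfl this]
    simp
  · have hlhs : ∀ v ∈ (univ : Finset V),
        ENNReal.ofReal (condMass pdata z i v) * negLog (fs v)
          = ENNReal.ofReal (condMass pdata z i v) *
              negLog (condMass pdata z i v / ∑ w, condMass pdata z i w) := by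
      intro v _; rw [hfs hS v, hSsum]
    rw [Finset.sum_congr rfl hlhs]
    exact ennreal_gibbs_ne_top _ hc

lemma sum_lt_sum_ennreal {ι : Type*} [Fintype ι] (a b : ι → ℝ≥0∞)
    (hle : ∀ i, a i ≤ b i) (hne : ∀ i, a i ≠ ⊤) (i0 : ι) (hlt : a i0 < b i0) :
    ∑ i, a i < ∑ i, b i := by
  classical
  rw [← Finset.add_sum_erase univ a (Finset.mem_univ i0),
    ← Finset.add_sum_erase univ b (Finset.mem_univ i0)]
  have h1 : ∑ i ∈ univ.erase i0, a i ≠ ⊤ := ENNReal.sum_ne_top.2 fun i _ => hne i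
  calc a i0 + ∑ i ∈ univ.erase i0, a i < b i0 + ∑ i ∈ univ.erase i0, a i :=
        ENNReal.add_lt_add_right h1 hlt
    _ ≤ b i0 + ∑ i ∈ univ.erase i0, b i :=
        add_le_add_right (Finset.sum_le_sum fun i _ => hle i) _

end Helpers

/-- For the MDM loss with non-leaky forward kernels, the ground-truth
unmasking posterior minimizes the loss among all families of conditional distributions,
and any minimizer agrees with the posterior at every pair `(i, z)` such that with positive
probability `x_t = z` and position `i` is masked in `z`. -/
theorem mdm_loss_minimizer
    {T V : Type*} [Fintype T] [Nonempty T] [Fintype V] [DecidableEq V] [Nonempty V]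
    {L : ℕ} (hL : 0 < L)
    (pdata : CSeq V L → ℝ) (hp0 : ∀ x, 0 ≤ pdata x) (hp1 : (∑ x : CSeq V L, pdata x) = 1)
    (ν : T → ℝ) (hν0 : ∀ t, 0 ≤ ν t) (hν1 : (∑ t : T, ν t) = 1)
    (time : T → ℝ) (htime : ∀ t, 0 < ν t → 0 < time t)
    (α : T → MSeq V L → ℝ) (hα0 : ∀ t z, 0 ≤ α t z)
    (hκ : ∀ (t : T) (x : CSeq V L), (∑ z : MSeq V L, α t z * (if agrees x z then 1 else 0)) = 1) :
    (∀ fstar : Fin L → MSeq V L → V → ℝ, IsCondFam fstar →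
      (∀ (i : Fin L) (z : MSeq V L) (v : V), z i = none → 0 < agreeMass pdata z →
        fstar i z v =
          (∑ x : CSeq V L, pdata x * (if agrees x z ∧ x i = v then 1 else 0))
            / agreeMass pdata z) →
      ∀ f : Fin L → MSeq V L → V → ℝ, IsCondFam f →
        mdmLoss ν time pdata α fstar ≤ mdmLoss ν time pdata α f) ∧
    (∀ f : Fin L → MSeq V L → V → ℝ, IsCondFam f →
      (∀ f' : Fin L → MSeq V L → V → ℝ, IsCondFam f' →
        mdmLoss ν time pdata α f ≤ mdmLoss ν time pdata α f') →
      ∀ (i : Fin L) (z : MSeq V L), z i = none →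
        0 < (∑ t : T, ∑ x : CSeq V L,
              ν t * pdata x * α t z * (if agrees x z then 1 else 0)) →
        ∀ v : V, f i z v =
          (∑ x : CSeq V L, pdata x * (if agrees x z ∧ x i = v then 1 else 0))
            / agreeMass pdata z) := by
  classical
  have hc : ∀ (z : MSeq V L) (i : Fin L) (v : V), 0 ≤ condMass pdata z i v :=
    fun z i v => condMass_nonneg pdata hp0 z i v
  constructor
  · intro fstar hfam hpost f hf
    rw [mdmLoss_decomp ν time pdata α hν0 hp0 hα0 htime,
      mdmLoss_decomp ν time pdata α hν0 hp0 hα0 htime]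
    apply Finset.sum_le_sum
    intro z _
    apply mul_le_mul_right
    apply Finset.sum_le_sum
    intro i _
    by_cases hzi : z i = none
    · simp only [if_pos hzi]
      exact inner_star_le pdata hp0 z i (fstar i z)
        (fun hS v => hpost i z v hzi hS) (f i z) (hf i z).1 (hf i z).2
    · simp [hzi]
  · intro f hf hmin i z hzi hpos v
    -- extract a time and a clean sequence with positive weight
    have h1 : ∑ t : T, (0:ℝ) < ∑ t : T,
        ∑ x : CSeq V L, ν t * pdata x * α t z * (if agrees x z then 1 else 0) := by
      simpa using hpos
    obtain ⟨t0, -, ht0⟩ := Finset.exists_lt_of_sum_lt h1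
    have h2 : ∑ x : CSeq V L, (0:ℝ) < ∑ x : CSeq V L,
        ν t0 * pdata x * α t0 z * (if agrees x z then 1 else 0) := by
      simpa using ht0
    obtain ⟨x0, -, hx0⟩ := Finset.exists_lt_of_sum_lt h2
    by_cases hag : agrees x0 z
    swap
    · rw [if_neg hag] at hx0; simp at hx0
    rw [if_pos hag, mul_one] at hx0
    have hν : 0 < ν t0 := by
      rcases eq_or_lt_of_le (hν0 t0) with h | h
      · exfalso; rw [← h] at hx0; simpa using hx0
      · exact h
    have hpx : 0 < pdata x0 := by
      rcases eq_or_lt_of_le (hp0 x0) with h | h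
      · exfalso; rw [← h] at hx0; simpa using hx0
      · exact h
    have hαz : 0 < α t0 z := by
      rcases eq_or_lt_of_le (hα0 t0 z) with h | h
      · exfalso; rw [← h] at hx0; simpa using hx0
      · exact h
    have htimepos : 0 < time t0 := htime t0 hν
    have hSz : 0 < agreeMass pdata z := by
      have hle : pdata x0 * (if agrees x0 z then 1 else 0) ≤ agreeMass pdata z := by
        unfold agreeMass
        exact Finset.single_le_sum
          (f := fun x : CSeq V L => pdata x * (if agrees x z then 1 else 0))
          (fun x _ => mul_nonneg (hp0 x) (by positivity)) (Finset.mem_univ x0)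
      rw [if_pos hag, mul_one] at hle
      linarith
    -- the candidate minimizer
    set fstar0 : Fin L → MSeq V L → V → ℝ := fun j z' v' =>
      if 0 < agreeMass pdata z' then condMass pdata z' j v' / agreeMass pdata z'
      else (Fintype.card V : ℝ)⁻¹ with hfstar0
    have hfs_eq : ∀ (j : Fin L) (z' : MSeq V L), 0 < agreeMass pdata z' →
        ∀ v', fstar0 j z' v' = condMass pdata z' j v' / agreeMass pdata z' :=
      fun j z' h v' => if_pos h
    have hcard : (0:ℝ) < Fintype.card V := by exact_mod_cast Fintype.card_pos
    have hfam0 : IsCondFam fstar0 := by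
      intro j z'
      constructor
      · intro v'
        by_cases h : 0 < agreeMass pdata z'
        · rw [hfs_eq j z' h v']
          exact div_nonneg (hc z' j v') h.le
        · have : fstar0 j z' v' = (Fintype.card V : ℝ)⁻¹ := if_neg h
          rw [this]
          positivity
      · by_cases h : 0 < agreeMass pdata z'
        · rw [Finset.sum_congr rfl (fun v' _ => hfs_eq j z' h v'), ← Finset.sum_div,
            sum_condMass, div_self h.ne']
        · rw [Finset.sum_congr rfl (fun (v' : V) (_ : v' ∈ univ) =>
            (if_neg h : fstar0 j z' v' = (Fintype.card V : ℝ)⁻¹)), Finset.sum_const,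
            nsmul_eq_mul, Finset.card_univ, mul_inv_cancel₀ hcard.ne']
    by_contra hnev
    have hA0 : (∑ t : T, ENNReal.ofReal (ν t * α t z / time t)) ≠ 0 := by
      have hpos1 : 0 < ENNReal.ofReal (ν t0 * α t0 z / time t0) :=
        ENNReal.ofReal_pos.2 (by positivity)
      have hle1 : ENNReal.ofReal (ν t0 * α t0 z / time t0)
          ≤ ∑ t : T, ENNReal.ofReal (ν t * α t z / time t) :=
        Finset.single_le_sum (f := fun t : T => ENNReal.ofReal (ν t * α t z / time t))
          (fun t _ => zero_le) (Finset.mem_univ t0)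
      exact (lt_of_lt_of_le hpos1 hle1).ne'
    have hAtop : ∀ z' : MSeq V L,
        (∑ t : T, ENNReal.ofReal (ν t * α t z' / time t)) ≠ ⊤ :=
      fun z' => ENNReal.sum_ne_top.2 fun t _ => ENNReal.ofReal_ne_top
    have hstar_ne_top : ∀ (z' : MSeq V L) (i' : Fin L),
        (∑ v' : V, ENNReal.ofReal (condMass pdata z' i' v') * negLog (fstar0 i' z' v')) ≠ ⊤ :=
      fun z' i' => inner_star_ne_top pdata hp0 z' i' _ (fun h => hfs_eq i' z' h)
    have hinner_lt :
        (∑ v' : V, ENNReal.ofReal (condMass pdata z i v') * negLog (fstar0 i z v'))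
          < ∑ v' : V, ENNReal.ofReal (condMass pdata z i v') * negLog (f i z v') := by
      have hSsum : ∑ w : V, condMass pdata z i w = agreeMass pdata z := sum_condMass pdata z i
      have hlhs : ∀ v' ∈ (univ : Finset V),
          ENNReal.ofReal (condMass pdata z i v') * negLog (fstar0 i z v')
            = ENNReal.ofReal (condMass pdata z i v') *
                negLog (condMass pdata z i v' / ∑ w : V, condMass pdata z i w) := by
        intro v' _
        rw [hfs_eq i z hSz v', hSsum]
      rw [Finset.sum_congr rfl hlhs]
      refine ennreal_gibbs_lt _ _ (hc z i) (hf i z).1 (hf i z).2 (by rw [hSsum]; exact hSz) ?_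
      exact ⟨v, by rw [hSsum]; exact hnev⟩
    have htot_lt : mdmLoss ν time pdata α fstar0 < mdmLoss ν time pdata α f := by
      rw [mdmLoss_decomp ν time pdata α hν0 hp0 hα0 htime,
        mdmLoss_decomp ν time pdata α hν0 hp0 hα0 htime]
      refine sum_lt_sum_ennreal _ _ (fun z' => ?_) (fun z' => ?_) z ?_
      · 
        apply mul_le_mul_right
        apply Finset.sum_le_sum
        intro i' _
        by_cases hzi' : z' i' = none
        · simp only [if_pos hzi']
          exact inner_star_le pdata hp0 z' i' (fstar0 i' z')
            (fun hS v' => hfs_eq i' z' hS v') (f i' z') (hf i' z').1 (hf i' z').2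
        · simp [hzi']
      · refine ENNReal.mul_ne_top (hAtop z') (ENNReal.sum_ne_top.2 fun i' _ => ?_)
        by_cases hzi' : z' i' = none
        · simp only [if_pos hzi']
          exact hstar_ne_top z' i'
        · simp [hzi']
      · apply (ENNReal.mul_lt_mul_iff_right hA0 (hAtop z)).2
        refine sum_lt_sum_ennreal _ _ (fun i' => ?_) (fun i' => ?_) i ?_
        · by_cases hzi' : z i' = none
          · simp only [if_pos hzi']
            exact inner_star_le pdata hp0 z i' (fstar0 i' z)
              (fun hS v' => hfs_eq i' z hS v') (f i' z) (hf i' z).1 (hf i' z).2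
          · simp [hzi']
        · by_cases hzi' : z i' = none
          · simp only [if_pos hzi']
            exact hstar_ne_top z i'
          · simp [hzi']
        · simp only [if_pos hzi]
          exact hinner_lt
    exact absurd ((hmin fstar0 hfam0).trans_lt htot_lt) (lt_irrefl _)
end

section
/- Let Θ be a finite set with |Θ| ≥ 2 and let θ be drawn uniformly at random from Θ. For each θ ∈ Θ let μ_θ be a probability distribution on a finite set S, and let Z_1,…,Z_n be i.i.d. samples from μ_θ given θ. Suppose there is a subset F ⊆ S and a number p ∈ [0,1) such that μ_θ(F) = p for all θ ∈ Θ, and the conditional distributions μ_θ(· | S∖F) coincide for all θ ∈ Θ. Then for every estimator θ̂ : S^n → Θ, P(θ̂(Z_1,…,Z_n) ≠ θ) ≥ (1 − 1/|Θ|) · (1 − p)^n. Consequently, if P(θ̂(Z_1,…,Z_n) ≠ θ) ≤ δ for some δ ∈ (0, 1 − 1/|Θ|), then n ≥ log((1 − 1/|Θ|)/δ) / log(1/(1−p)). -/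
open Finset

/-- Average error probability of the estimator `est` when `θ` is uniform on `Θ` and
`Z_1,…,Z_n` are i.i.d. from `μ θ` given `θ`. -/
noncomputable def errProb {Θ S : Type*} [Fintype Θ] [Fintype S] [DecidableEq Θ]
    (μ : Θ → S → ℝ) (n : ℕ) (est : (Fin n → S) → Θ) : ℝ :=
  ∑ θ : Θ, (1 / (Fintype.card Θ : ℝ)) *
    ∑ ω : Fin n → S, (∏ k : Fin n, μ θ (ω k)) * (if est ω = θ then 0 else 1)

/-- Suppose every `μ θ` gives the set `F` the same mass `p < 1` and the
conditional distributions on the complement of `F` all coincide. Then every estimator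
errs with probability at least `(1 − 1/|Θ|)(1−p)^n`; consequently, error probability at
most `δ ∈ (0, 1 − 1/|Θ|)` forces `n ≥ log((1 − 1/|Θ|)/δ) / log(1/(1−p))`. -/
theorem masking_sample_complexity_lower_bound
    {Θ S : Type*} [Fintype Θ] [Fintype S] [DecidableEq Θ] [Nonempty Θ] [Nonempty S]
    (hΘ : 2 ≤ Fintype.card Θ)
    (μ : Θ → S → ℝ) (hμ0 : ∀ θ s, 0 ≤ μ θ s) (hμ1 : ∀ θ, (∑ s : S, μ θ s) = 1)
    (F : Finset S) (p : ℝ) (hp0 : 0 ≤ p) (hp1 : p < 1)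
    (hF : ∀ θ, (∑ s ∈ F, μ θ s) = p)
    (hcond : ∀ θ θ' : Θ, ∀ s ∉ F, μ θ s / (1 - p) = μ θ' s / (1 - p))
    (n : ℕ) (est : (Fin n → S) → Θ) :
    (1 - 1 / (Fintype.card Θ : ℝ)) * (1 - p) ^ n ≤ errProb μ n est ∧
    (∀ δ : ℝ, 0 < δ → δ < 1 - 1 / (Fintype.card Θ : ℝ) → errProb μ n est ≤ δ →
      Real.log ((1 - 1 / (Fintype.card Θ : ℝ)) / δ) / Real.log (1 / (1 - p)) ≤ (n : ℝ)) := by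
  classical
  set c : ℝ := (Fintype.card Θ : ℝ) with hc
  have hc2 : (2:ℝ) ≤ c := by rw [hc]; exact_mod_cast hΘ
  have hc0 : (0:ℝ) < c := by linarith
  have h1p : (0:ℝ) < 1 - p := by linarith
  have h1p' : (1:ℝ) - p ≠ 0 := ne_of_gt h1p
  have hμeq : ∀ θ θ' : Θ, ∀ s ∉ F, μ θ s = μ θ' s := by
    intro θ θ' s hs
    have h := hcond θ θ' s hs
    field_simp at h
    exact h
  obtain ⟨θ0⟩ := ‹Nonempty Θ›
  set T : Finset (Fin n → S) := Fintype.piFinset (fun _ => Fᶜ) with hT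
  have hprodT : ∀ ω ∈ T, ∀ θ : Θ, ∏ k, μ θ (ω k) = ∏ k, μ θ0 (ω k) := by
    intro ω hω θ
    refine Finset.prod_congr rfl fun k _ => ?_
    have hk : ω k ∈ Fᶜ := (Fintype.mem_piFinset.mp hω) k
    exact hμeq θ θ0 _ (Finset.mem_compl.mp hk)
  have hcompl : ∑ s ∈ Fᶜ, μ θ0 s = 1 - p := by
    have h := Finset.sum_add_sum_compl F (fun s => μ θ0 s)
    have h1 := hμ1 θ0
    have h2 := hF θ0
    linarith
  have hTsum : ∑ ω ∈ T, ∏ k, μ θ0 (ω k) = (1 - p) ^ n := by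
    rw [hT, ← Finset.prod_univ_sum]
    simp [hcompl]
  have hsumθ : ∀ ω : Fin n → S,
      (∑ θ : Θ, (if est ω = θ then (0:ℝ) else 1)) = c - 1 := by
    intro ω
    have : ∀ θ : Θ, (if est ω = θ then (0:ℝ) else 1)
        = 1 - (if est ω = θ then (1:ℝ) else 0) := by
      intro θ; split <;> ring
    rw [Finset.sum_congr rfl fun θ _ => this θ, Finset.sum_sub_distrib,
      Finset.sum_ite_eq]
    simp [hc, Finset.card_univ]
  have key : (1 - 1/c) * (1 - p) ^ n ≤ errProb μ n est := by
    have hstep : ∀ θ : Θ,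
        ∑ ω ∈ T, (∏ k, μ θ (ω k)) * (if est ω = θ then (0:ℝ) else 1) ≤
        ∑ ω : Fin n → S, (∏ k, μ θ (ω k)) * (if est ω = θ then (0:ℝ) else 1) := by
      intro θ
      apply Finset.sum_le_sum_of_subset_of_nonneg (Finset.subset_univ T)
      intro ω _ _
      have hpr : 0 ≤ ∏ k, μ θ (ω k) := Finset.prod_nonneg fun k _ => hμ0 θ (ω k)
      apply mul_nonneg hpr
      split <;> norm_num
    have hrw : ∑ θ : Θ, (1/c) * ∑ ω ∈ T,
        (∏ k, μ θ (ω k)) * (if est ω = θ then (0:ℝ) else 1)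
        = (1 - 1/c) * (1 - p) ^ n := by
      have h1 : ∀ θ : Θ, ∑ ω ∈ T, (∏ k, μ θ (ω k)) * (if est ω = θ then (0:ℝ) else 1)
          = ∑ ω ∈ T, (∏ k, μ θ0 (ω k)) * (if est ω = θ then (0:ℝ) else 1) :=
        fun θ => Finset.sum_congr rfl fun ω hω => by rw [hprodT ω hω θ]
      calc ∑ θ : Θ, (1/c) * ∑ ω ∈ T,
            (∏ k, μ θ (ω k)) * (if est ω = θ then (0:ℝ) else 1)
          = (1/c) * ∑ θ : Θ, ∑ ω ∈ T,
            (∏ k, μ θ0 (ω k)) * (if est ω = θ then (0:ℝ) else 1) := by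
            rw [← Finset.mul_sum]
            congr 1
            exact Finset.sum_congr rfl fun θ _ => h1 θ
        _ = (1/c) * ∑ ω ∈ T, (∏ k, μ θ0 (ω k)) *
            ∑ θ : Θ, (if est ω = θ then (0:ℝ) else 1) := by
            rw [Finset.sum_comm]
            congr 1
            exact Finset.sum_congr rfl fun ω _ => (Finset.mul_sum _ _ _).symm
        _ = (1/c) * ((c - 1) * (1 - p) ^ n) := by
            rw [← hTsum]
            congr 1
            rw [Finset.mul_sum]
            refine Finset.sum_congr rfl fun ω _ => ?_
            rw [hsumθ ω]; ring
        _ = (1 - 1/c) * (1 - p) ^ n := by field_simp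
    rw [errProb, ← hrw]
    apply Finset.sum_le_sum
    intro θ _
    have := hstep θ
    have h1c : 0 ≤ 1/c := by positivity
    exact mul_le_mul_of_nonneg_left this h1c
  refine ⟨key, ?_⟩
  intro δ hδ0 hδ hle
  have hbd : (1 - 1/c) * (1 - p) ^ n ≤ δ := key.trans hle
  have hA : 0 < 1 - 1/c := lt_trans hδ0 hδ
  have hpow : 0 < (1 - p) ^ n := pow_pos h1p n
  have h2 : (1 - 1/c)/δ ≤ (1/(1 - p)) ^ n := by
    rw [div_pow, one_pow, div_le_div_iff₀ hδ0 hpow]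
    linarith
  have hlog : Real.log ((1 - 1/c)/δ) ≤ (n : ℝ) * Real.log (1/(1 - p)) := by
    have h3 := Real.log_le_log (by positivity) h2
    rwa [Real.log_pow] at h3
  have hL : 0 ≤ Real.log (1/(1 - p)) := by
    apply Real.log_nonneg
    rw [le_div_iff₀ h1p]; linarith
  rcases eq_or_lt_of_le hL with h0 | h0
  · rw [← h0, div_zero]; positivity
  · rw [div_le_iff₀ h0]; exact hlog
end

section
/- Let P and Q be probability distributions on a finite set S, let T ≥ 1, and let Z_1,…,Z_T be i.i.d. samples from P. Then P(∏_{t=1}^T Q(Z_t)/P(Z_t) ≥ 1) ≤ exp(−T · C(P,Q)), where C(P,Q) is the Chernoff information between P and Q. -/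
open Finset

/-- Chernoff information `C(P,Q) = −log inf_{s∈(0,1)} ∑_z P(z)^{1−s} Q(z)^s`. -/
noncomputable def chernoffInfo {S : Type*} [Fintype S] (P Q : S → ℝ) : ℝ :=
  -Real.log (sInf ((fun s : ℝ => ∑ z : S, P z ^ (1 - s) * Q z ^ s) '' Set.Ioo 0 1))

/-- **Chernoff bound.** For probability distributions `P`, `Q` on a finite
set and i.i.d. samples `Z_1,…,Z_T ~ P`,
`P(∏_t Q(Z_t)/P(Z_t) ≥ 1) ≤ exp(−T · C(P,Q))`. -/
theorem chernoff_bound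
    {S : Type*} [Fintype S] [Nonempty S]
    (P Q : S → ℝ) (hP0 : ∀ z, 0 ≤ P z) (hP1 : (∑ z : S, P z) = 1)
    (hQ0 : ∀ z, 0 ≤ Q z) (hQ1 : (∑ z : S, Q z) = 1)
    (T : ℕ) (hT : 1 ≤ T) :
    (∑ ω : Fin T → S, (∏ t : Fin T, P (ω t)) *
        (if 1 ≤ ∏ t : Fin T, Q (ω t) / P (ω t) then 1 else 0))
      ≤ Real.exp (-(T : ℝ) * chernoffInfo P Q) := by
  set f : ℝ → ℝ := fun s => ∑ z : S, P z ^ (1 - s) * Q z ^ s with hf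
  set L : ℝ := ∑ ω : Fin T → S, (∏ t : Fin T, P (ω t)) *
      (if 1 ≤ ∏ t : Fin T, Q (ω t) / P (ω t) then 1 else 0) with hL
  set m : ℝ := sInf (f '' Set.Ioo 0 1) with hm
  -- nonnegativity facts
  have hfnn : ∀ s ∈ Set.Ioo (0:ℝ) 1, 0 ≤ f s := by
    intro s _
    exact Finset.sum_nonneg fun z _ =>
      mul_nonneg (Real.rpow_nonneg (hP0 z) _) (Real.rpow_nonneg (hQ0 z) _)
  have hLnn : 0 ≤ L := by
    apply Finset.sum_nonneg
    intro ω _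
    apply mul_nonneg (Finset.prod_nonneg fun t _ => hP0 (ω t))
    positivity
  have hne : (f '' Set.Ioo 0 1).Nonempty := ⟨f (1/2), ⟨1/2, by norm_num, rfl⟩⟩
  have hbdd : BddBelow (f '' Set.Ioo 0 1) := by
    refine ⟨0, ?_⟩
    rintro x ⟨s, hs, rfl⟩
    exact hfnn s hs
  have hmnn : 0 ≤ m := le_csInf hne (by rintro x ⟨s, hs, rfl⟩; exact hfnn s hs)
  -- Key: L ≤ f s ^ T for s ∈ (0,1)
  have key : ∀ s ∈ Set.Ioo (0:ℝ) 1, L ≤ f s ^ T := by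
    rintro s ⟨hs0, hs1⟩
    have step1 : L ≤ ∑ ω : Fin T → S, ∏ t : Fin T, (P (ω t) * (Q (ω t) / P (ω t)) ^ s) := by
      apply Finset.sum_le_sum
      intro ω _
      rw [Finset.prod_mul_distrib]
      have hr : ∀ t : Fin T, 0 ≤ Q (ω t) / P (ω t) := fun t =>
        div_nonneg (hQ0 _) (hP0 _)
      rw [Real.finset_prod_rpow _ _ (fun t _ => hr t) s]
      apply mul_le_mul_of_nonneg_left _ (Finset.prod_nonneg fun t _ => hP0 (ω t))
      split_ifs with h
      · exact Real.one_le_rpow h (le_of_lt hs0)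
      · exact Real.rpow_nonneg (Finset.prod_nonneg fun t _ => hr t) s
    have step2 : ∑ ω : Fin T → S, ∏ t : Fin T, (P (ω t) * (Q (ω t) / P (ω t)) ^ s)
        = (∑ z : S, P z * (Q z / P z) ^ s) ^ T :=
      (Fintype.sum_pow (fun z : S => P z * (Q z / P z) ^ s) T).symm
    have step3 : ∀ z : S, P z * (Q z / P z) ^ s = P z ^ (1 - s) * Q z ^ s := by
      intro z
      rcases eq_or_lt_of_le (hP0 z) with h0 | h0
      · rw [← h0, Real.zero_rpow (by linarith : (1:ℝ) - s ≠ 0), zero_mul, zero_mul]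
      · have hPs : (0:ℝ) < P z ^ s := Real.rpow_pos_of_pos h0 s
        rw [Real.div_rpow (hQ0 z) h0.le, ← mul_div_assoc, div_eq_iff hPs.ne',
          mul_right_comm, ← Real.rpow_add h0, sub_add_cancel, Real.rpow_one, mul_comm]
    calc L ≤ _ := step1
      _ = (∑ z : S, P z * (Q z / P z) ^ s) ^ T := step2
      _ = f s ^ T := by rw [hf]; congr 1; exact Finset.sum_congr rfl fun z _ => step3 z
  -- L ≤ m ^ T
  have hLm : L ≤ m ^ T := by
    have hT0 : (T : ℝ) ≠ 0 := Nat.cast_ne_zero.mpr (by omega)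
    have hroot : L ^ ((T : ℝ)⁻¹) ≤ m := by
      apply le_csInf hne
      rintro x ⟨s, hs, rfl⟩
      have := key s hs
      calc L ^ ((T:ℝ)⁻¹) ≤ (f s ^ T) ^ ((T:ℝ)⁻¹) :=
            Real.rpow_le_rpow hLnn this (by positivity)
        _ = f s := by
            rw [← Real.rpow_natCast (f s) T, ← Real.rpow_mul (hfnn s hs),
              mul_inv_cancel₀ hT0, Real.rpow_one]
    calc L = (L ^ ((T:ℝ)⁻¹)) ^ T := by
          rw [← Real.rpow_natCast (L ^ ((T:ℝ)⁻¹)) T, ← Real.rpow_mul hLnn,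
            inv_mul_cancel₀ hT0, Real.rpow_one]
      _ ≤ m ^ T := pow_le_pow_left₀ (Real.rpow_nonneg hLnn _) hroot T
  -- conclude
  have hCI : chernoffInfo P Q = -Real.log m := rfl
  have hrhs : -(T : ℝ) * chernoffInfo P Q = (T : ℝ) * Real.log m := by
    rw [hCI]; ring
  rw [hrhs]
  rcases eq_or_lt_of_le hmnn with h0 | h0
  · calc L ≤ m ^ T := hLm
      _ = 0 := by rw [← h0]; exact zero_pow (by omega)
      _ ≤ _ := (Real.exp_pos _).le
  · calc L ≤ m ^ T := hLm
      _ = Real.exp ((T:ℝ) * Real.log m) := by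
          rw [mul_comm, Real.exp_mul, Real.exp_log h0, Real.rpow_natCast]
end

section
/- Let Θ be a finite set with |Θ| ≥ 2, fix θ ∈ Θ, and for each θ' ∈ Θ let P_{θ'} be a probability distribution on a finite set S. Suppose there is κ > 0 such that C(P_θ, P_{θ'}) ≥ κ for every θ' ≠ θ. Let Z_1,…,Z_T be i.i.d. samples from P_θ. Then P(∃ θ' ≠ θ : ∏_{t=1}^T P_{θ'}(Z_t) ≥ ∏_{t=1}^T P_θ(Z_t)) ≤ (|Θ|−1) · exp(−Tκ); in particular, for any δ ∈ (0,1), if T ≥ (log(|Θ|−1) + log(1/δ))/κ then the maximum a posteriori estimator under a uniform prior (which selects an element of Θ maximizing the likelihood ∏_t P_{θ'}(Z_t)) differs from θ with probability at most δ. -/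
open Finset

private lemma ind_sum_le_pow {S : Type*} [Fintype S] (P Q : S → ℝ)
    (hP : ∀ z, 0 ≤ P z) (hQ : ∀ z, 0 ≤ Q z) (T : ℕ) {s : ℝ} (hs : s ∈ Set.Ioo (0:ℝ) 1) :
    (∑ ω : Fin T → S, (∏ t : Fin T, P (ω t)) *
      (if (∏ t : Fin T, P (ω t)) ≤ ∏ t : Fin T, Q (ω t) then 1 else 0))
      ≤ (∑ z : S, P z ^ (1 - s) * Q z ^ s) ^ T := by
  classical
  have key : ∀ ω : Fin T → S,
      (∏ t : Fin T, P (ω t)) * (if (∏ t : Fin T, P (ω t)) ≤ ∏ t : Fin T, Q (ω t) then 1 else 0)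
        ≤ ∏ t : Fin T, (P (ω t) ^ (1 - s) * Q (ω t) ^ s) := by
    intro ω
    have hnn : 0 ≤ ∏ t : Fin T, (P (ω t) ^ (1 - s) * Q (ω t) ^ s) :=
      Finset.prod_nonneg fun t _ =>
        mul_nonneg (Real.rpow_nonneg (hP _) _) (Real.rpow_nonneg (hQ _) _)
    split_ifs with h
    · rw [mul_one]
      have hprod : ∏ t : Fin T, (P (ω t) ^ (1 - s) * Q (ω t) ^ s)
          = (∏ t : Fin T, P (ω t)) ^ (1 - s) * (∏ t : Fin T, Q (ω t)) ^ s := by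
        rw [Finset.prod_mul_distrib,
          ← Real.finset_prod_rpow _ _ (fun t _ => hP _),
          ← Real.finset_prod_rpow _ _ (fun t _ => hQ _)]
      rw [hprod]
      have hL0 : 0 ≤ ∏ t : Fin T, P (ω t) := Finset.prod_nonneg fun t _ => hP _
      rcases hL0.eq_or_lt with h0 | h0
      · rw [← h0]
        exact mul_nonneg (Real.rpow_nonneg le_rfl _)
          (Real.rpow_nonneg (Finset.prod_nonneg fun t _ => hQ _) _)
      · calc ∏ t : Fin T, P (ω t)
            = (∏ t : Fin T, P (ω t)) ^ (1 - s) * (∏ t : Fin T, P (ω t)) ^ s := by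
              rw [← Real.rpow_add h0, sub_add_cancel, Real.rpow_one]
          _ ≤ (∏ t : Fin T, P (ω t)) ^ (1 - s) * (∏ t : Fin T, Q (ω t)) ^ s := by
              exact mul_le_mul_of_nonneg_left (Real.rpow_le_rpow hL0 h hs.1.le)
                (Real.rpow_nonneg hL0 _)
    · rw [mul_zero]; exact hnn
  calc (∑ ω : Fin T → S, (∏ t : Fin T, P (ω t)) *
      (if (∏ t : Fin T, P (ω t)) ≤ ∏ t : Fin T, Q (ω t) then 1 else 0))
      ≤ ∑ ω : Fin T → S, ∏ t : Fin T, (P (ω t) ^ (1 - s) * Q (ω t) ^ s) :=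
        Finset.sum_le_sum fun ω _ => key ω
    _ = (∑ z : S, P z ^ (1 - s) * Q z ^ s) ^ T := by
        symm
        calc (∑ z : S, P z ^ (1 - s) * Q z ^ s) ^ T
            = ∏ _t : Fin T, ∑ z : S, P z ^ (1 - s) * Q z ^ s := by
              rw [Finset.prod_const, Finset.card_univ, Fintype.card_fin]
          _ = ∑ ω ∈ Fintype.piFinset (fun _ : Fin T => (univ : Finset S)),
                ∏ t : Fin T, (P (ω t) ^ (1 - s) * Q (ω t) ^ s) :=
              Finset.prod_univ_sum _ fun _ z => P z ^ (1 - s) * Q z ^ s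
          _ = ∑ ω : Fin T → S, ∏ t : Fin T, (P (ω t) ^ (1 - s) * Q (ω t) ^ s) := by
              rw [Fintype.piFinset_univ]

private lemma chernoff_single_bound {S : Type*} [Fintype S] (P Q : S → ℝ)
    (hP : ∀ z, 0 ≤ P z) (hQ : ∀ z, 0 ≤ Q z) (T : ℕ) (hT : 1 ≤ T)
    (κ : ℝ) (hκle : κ ≤ chernoffInfo P Q) :
    (∑ ω : Fin T → S, (∏ t : Fin T, P (ω t)) *
      (if (∏ t : Fin T, P (ω t)) ≤ ∏ t : Fin T, Q (ω t) then 1 else 0))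
      ≤ Real.exp (-(T : ℝ) * κ) := by
  classical
  set g : ℝ → ℝ := fun s => ∑ z : S, P z ^ (1 - s) * Q z ^ s with hg
  set A : Set ℝ := g '' Set.Ioo 0 1 with hA
  have hgnn : ∀ s : ℝ, 0 ≤ g s := fun s =>
    Finset.sum_nonneg fun z _ =>
      mul_nonneg (Real.rpow_nonneg (hP z) _) (Real.rpow_nonneg (hQ z) _)
  have hne : A.Nonempty := ⟨g (1/2), ⟨1/2, by norm_num, rfl⟩⟩
  have hbdd : BddBelow A := ⟨0, by rintro x ⟨s, _, rfl⟩; exact hgnn s⟩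
  have hm0 : 0 ≤ sInf A := le_csInf hne (by rintro x ⟨s, _, rfl⟩; exact hgnn s)
  set L : (Fin T → S) → ℝ := fun ω => ∏ t : Fin T, P (ω t) with hLdef
  set X : ℝ := ∑ ω : Fin T → S, L ω *
      (if L ω ≤ ∏ t : Fin T, Q (ω t) then 1 else 0) with hX
  have hX0 : 0 ≤ X := Finset.sum_nonneg fun ω _ => by
    apply mul_nonneg (Finset.prod_nonneg fun t _ => hP _)
    split_ifs <;> norm_num
  have hXle : ∀ s ∈ Set.Ioo (0:ℝ) 1, X ≤ g s ^ T := fun s hs =>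
    ind_sum_le_pow P Q hP hQ T hs
  have hTne : T ≠ 0 := by omega
  have h1 : X ≤ sInf A ^ T := by
    by_contra hcon
    push_neg at hcon
    have hx0 : 0 < X := lt_of_le_of_lt (pow_nonneg hm0 T) hcon
    set r : ℝ := X ^ ((T : ℝ)⁻¹) with hr
    have hrT : r ^ T = X := by
      rw [← Real.rpow_natCast r T, hr, ← Real.rpow_mul hx0.le,
        inv_mul_cancel₀ (by exact_mod_cast hTne), Real.rpow_one]
    have hmr : sInf A < r := by
      by_contra hc
      push_neg at hc
      have := pow_le_pow_left₀ (Real.rpow_nonneg hx0.le _) hc T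
      rw [hrT] at this
      exact absurd this (not_le.mpr hcon)
    obtain ⟨x, ⟨s, hs, rfl⟩, hxr⟩ := (csInf_lt_iff hbdd hne).mp hmr
    have h3 : g s ^ T < r ^ T := pow_lt_pow_left₀ hxr (hgnn s) hTne
    rw [hrT] at h3
    exact absurd (hXle s hs) (not_le.mpr h3)
  have h2 : sInf A ^ T ≤ Real.exp (-κ) ^ T := by
    apply pow_le_pow_left₀ hm0
    rcases hm0.eq_or_lt with h0 | h0
    · rw [← h0]; positivity
    · have hlog : Real.log (sInf A) ≤ -κ := by
        have := hκle
        unfold chernoffInfo at this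
        rw [← hA] at this
        linarith
      calc sInf A = Real.exp (Real.log (sInf A)) := (Real.exp_log h0).symm
        _ ≤ Real.exp (-κ) := Real.exp_le_exp.mpr hlog
  have h3 : Real.exp (-κ) ^ T = Real.exp (-(T : ℝ) * κ) := by
    rw [← Real.exp_nat_mul]
    ring_nf
  calc X ≤ sInf A ^ T := h1
    _ ≤ Real.exp (-κ) ^ T := h2
    _ = Real.exp (-(T : ℝ) * κ) := h3

/-- If `C(P_θ, P_{θ'}) ≥ κ > 0` for all `θ' ≠ θ` and `Z_1,…,Z_T` are
i.i.d. from `P_θ`, then the probability that some wrong hypothesis has likelihood at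
least that of `θ` is at most `(|Θ|−1)·exp(−Tκ)`. Consequently, for `δ ∈ (0,1)`, if
`T ≥ (log(|Θ|−1) + log(1/δ))/κ`, then any maximum-likelihood (MAP under uniform prior)
estimator errs with probability at most `δ`. -/
theorem map_estimator_error_bound
    {Θ S : Type*} [Fintype Θ] [Fintype S] [DecidableEq Θ] [Nonempty Θ] [Nonempty S]
    (hΘ : 2 ≤ Fintype.card Θ)
    (θ : Θ) (P : Θ → S → ℝ)
    (hP0 : ∀ θ' z, 0 ≤ P θ' z) (hP1 : ∀ θ', (∑ z : S, P θ' z) = 1)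
    (κ : ℝ) (hκ : 0 < κ)
    (hsep : ∀ θ' : Θ, θ' ≠ θ → κ ≤ chernoffInfo (P θ) (P θ'))
    (T : ℕ) (hT : 1 ≤ T) :
    (∑ ω : Fin T → S, (∏ t : Fin T, P θ (ω t)) *
        (if ∃ θ' : Θ, θ' ≠ θ ∧ (∏ t : Fin T, P θ (ω t)) ≤ ∏ t : Fin T, P θ' (ω t)
         then 1 else 0))
      ≤ ((Fintype.card Θ : ℝ) - 1) * Real.exp (-(T : ℝ) * κ) ∧
    (∀ δ : ℝ, 0 < δ → δ < 1 →
      (Real.log ((Fintype.card Θ : ℝ) - 1) + Real.log (1 / δ)) / κ ≤ (T : ℝ) →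
      ∀ est : (Fin T → S) → Θ,
        (∀ (ω : Fin T → S) (θ' : Θ),
          (∏ t : Fin T, P θ' (ω t)) ≤ ∏ t : Fin T, P (est ω) (ω t)) →
        (∑ ω : Fin T → S, (∏ t : Fin T, P θ (ω t)) *
            (if est ω = θ then 0 else 1)) ≤ δ) := by
  classical
  set L : (Fin T → S) → ℝ := fun ω => ∏ t : Fin T, P θ (ω t) with hLdef
  have hL0 : ∀ ω, 0 ≤ L ω := fun ω => Finset.prod_nonneg fun t _ => hP0 _ _
  -- union bound
  have hmain : (∑ ω : Fin T → S, L ω *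
        (if ∃ θ' : Θ, θ' ≠ θ ∧ L ω ≤ ∏ t : Fin T, P θ' (ω t)
         then 1 else 0))
      ≤ ((Fintype.card Θ : ℝ) - 1) * Real.exp (-(T : ℝ) * κ) := by
    have step1 : (∑ ω : Fin T → S, L ω *
          (if ∃ θ' : Θ, θ' ≠ θ ∧ L ω ≤ ∏ t : Fin T, P θ' (ω t) then 1 else 0))
        ≤ ∑ ω : Fin T → S, ∑ θ' ∈ univ.erase θ,
            L ω * (if L ω ≤ ∏ t : Fin T, P θ' (ω t) then 1 else 0) := by
      apply Finset.sum_le_sum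
      intro ω _
      have hnn : ∀ θ'' ∈ univ.erase θ,
          0 ≤ L ω * (if L ω ≤ ∏ t : Fin T, P θ'' (ω t) then 1 else 0) := by
        intro θ'' _
        apply mul_nonneg (hL0 ω)
        split_ifs <;> norm_num
      split_ifs with h
      · obtain ⟨θ', hne, hle⟩ := h
        have hmem : θ' ∈ univ.erase θ := Finset.mem_erase.mpr ⟨hne, mem_univ _⟩
        have := Finset.single_le_sum hnn hmem
        rwa [if_pos hle] at this
      · rw [mul_zero]
        exact Finset.sum_nonneg hnn
    have step2 : (∑ ω : Fin T → S, ∑ θ' ∈ univ.erase θ,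
          L ω * (if L ω ≤ ∏ t : Fin T, P θ' (ω t) then 1 else 0))
        ≤ ((Fintype.card Θ : ℝ) - 1) * Real.exp (-(T : ℝ) * κ) := by
      rw [Finset.sum_comm]
      have hbd : ∀ θ' ∈ univ.erase θ,
          (∑ ω : Fin T → S, L ω * (if L ω ≤ ∏ t : Fin T, P θ' (ω t) then 1 else 0))
            ≤ Real.exp (-(T : ℝ) * κ) := by
        intro θ' hmem
        have hne : θ' ≠ θ := (Finset.mem_erase.mp hmem).1
        exact chernoff_single_bound (P θ) (P θ') (hP0 θ) (hP0 θ') T hT κ (hsep θ' hne)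
      calc (∑ θ' ∈ univ.erase θ, ∑ ω : Fin T → S,
            L ω * (if L ω ≤ ∏ t : Fin T, P θ' (ω t) then 1 else 0))
          ≤ ∑ _θ' ∈ univ.erase θ, Real.exp (-(T : ℝ) * κ) := Finset.sum_le_sum hbd
        _ = ((Fintype.card Θ : ℝ) - 1) * Real.exp (-(T : ℝ) * κ) := by
            rw [Finset.sum_const, Finset.card_erase_of_mem (mem_univ θ), Finset.card_univ,
              nsmul_eq_mul, Nat.cast_sub (by omega), Nat.cast_one]
    exact step1.trans step2
  refine ⟨hmain, ?_⟩
  intro δ hδ0 hδ1 hTδ est hest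
  set a : ℝ := (Fintype.card Θ : ℝ) - 1 with ha
  have ha1 : 1 ≤ a := by
    have : (2 : ℝ) ≤ (Fintype.card Θ : ℝ) := by exact_mod_cast hΘ
    simp [ha]; linarith
  have ha0 : 0 < a := lt_of_lt_of_le one_pos ha1
  have hstep : (∑ ω : Fin T → S, L ω * (if est ω = θ then 0 else 1))
      ≤ ∑ ω : Fin T → S, L ω *
        (if ∃ θ' : Θ, θ' ≠ θ ∧ L ω ≤ ∏ t : Fin T, P θ' (ω t) then 1 else 0) := by
    apply Finset.sum_le_sum
    intro ω _
    split_ifs with h1 h2 h3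
    · rw [mul_zero, mul_one]; exact hL0 ω
    · exact le_refl _
    · exact le_refl _
    · exact absurd ⟨est ω, h1, hest ω θ⟩ h3
  have hexp : a * Real.exp (-(T : ℝ) * κ) ≤ δ := by
    have h1 : Real.log a + Real.log (1 / δ) ≤ (T : ℝ) * κ := by
      rw [div_le_iff₀ hκ] at hTδ
      linarith
    have h2 : Real.exp (-(T : ℝ) * κ) ≤ δ / a := by
      have heq : -(Real.log a + Real.log (1 / δ)) = Real.log (δ / a) := by
        rw [one_div, Real.log_inv, Real.log_div (ne_of_gt hδ0) (ne_of_gt ha0)]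
        ring
      calc Real.exp (-(T : ℝ) * κ) ≤ Real.exp (-(Real.log a + Real.log (1 / δ))) := by
            apply Real.exp_le_exp.mpr; linarith
        _ = δ / a := by rw [heq, Real.exp_log (div_pos hδ0 ha0)]
    calc a * Real.exp (-(T : ℝ) * κ) ≤ a * (δ / a) :=
          mul_le_mul_of_nonneg_left h2 ha0.le
      _ = δ := by field_simp
  exact hstep.trans (hmain.trans hexp)
end

section
/- Let m ≥ 4 be an even integer, Δ := m/2 ∈ ℤ/mℤ, η ∈ (0,1/2), and d ≥ 1. Let U_1,…,U_d be i.i.d. uniform on {0, Δ} ⊆ ℤ/mℤ, and let E ∈ ℤ/mℤ be independent of (U_1,…,U_d) with P(E = 0) = 1−η and P(E = a) = η/(m−1) for every a ≠ 0. For θ ∈ ℤ/mℤ define Y_θ := θ + Σ_{j=1}^d U_j + E. Then for every strict subset S ⊊ {1,…,d}, the joint distribution of ((U_j)_{j∈S}, Y_0) equals the joint distribution of ((U_j)_{j∈S}, Y_Δ); equivalently, the conditional distribution of Y_θ given (U_j)_{j∈S} is the same for θ = 0 and θ = Δ. -/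
open Finset

/-- The noise distribution on `ℤ/mℤ`: mass `1−η` at `0` and `η/(m−1)` elsewhere. -/
noncomputable def noiseDist (m : ℕ) (η : ℝ) (e : ZMod m) : ℝ :=
  if e = 0 then 1 - η else η / ((m : ℝ) - 1)

/-- Joint probability `P((U_j)_{j∈S} = (us_j)_{j∈S}, Y_θ = y)` where the `U_j` are i.i.d.
uniform on `{0, Δ}` (encoded via uniform `b : Fin d → Bool`, `U_j = if b j then Δ else 0`),
`E` is independent noise with law `noiseDist`, and `Y_θ = θ + ∑_j U_j + E`. -/
noncomputable def jointProb (m : ℕ) [NeZero m] (η : ℝ) (d : ℕ) (θ : ZMod m)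
    (S : Finset (Fin d)) (us : Fin d → ZMod m) (y : ZMod m) : ℝ :=
  ∑ b : Fin d → Bool, ∑ e : ZMod m,
    (((1 : ℝ) / 2) ^ d * noiseDist m η e) *
      (if (∀ j ∈ S, (if b j then ((m / 2 : ℕ) : ZMod m) else 0) = us j) ∧
          θ + (∑ j : Fin d, (if b j then ((m / 2 : ℕ) : ZMod m) else 0)) + e = y
       then 1 else 0)

/-- **posterior collapse.** For `m ≥ 4` even, `Δ = m/2`, `η ∈ (0,1/2)`,
`d ≥ 1`, and every strict subset `S ⊊ {1,…,d}`, the joint distribution of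
`((U_j)_{j∈S}, Y_0)` equals that of `((U_j)_{j∈S}, Y_Δ)`. -/
theorem posterior_collapse
    (m : ℕ) [NeZero m] (hm : 4 ≤ m) (hme : Even m)
    (η : ℝ) (hη : η ∈ Set.Ioo (0 : ℝ) (1 / 2))
    (d : ℕ) (hd : 1 ≤ d) :
    ∀ S : Finset (Fin d), S ≠ Finset.univ →
      ∀ (us : Fin d → ZMod m) (y : ZMod m),
        jointProb m η d 0 S us y = jointProb m η d ((m / 2 : ℕ) : ZMod m) S us y := by
  intro S hS us y
  set Δ : ZMod m := ((m / 2 : ℕ) : ZMod m) with hΔdef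
  have hΔΔ : Δ + Δ = 0 := by
    have h2 : m / 2 + m / 2 = m := by
      obtain ⟨k, hk⟩ := hme
      omega
    rw [hΔdef, ← Nat.cast_add, h2, ZMod.natCast_self]
  -- pick an index outside S
  obtain ⟨j₀, hj₀⟩ : ∃ j₀, j₀ ∉ S := by
    by_contra h
    push_neg at h
    exact hS (Finset.eq_univ_iff_forall.mpr h)
  -- flip involution
  let f : (Fin d → Bool) → (Fin d → Bool) := fun b => Function.update b j₀ (!b j₀)
  have hf : Function.Involutive f := by
    intro b
    funext j
    by_cases h : j = j₀
    · subst h; simp [f, Function.update]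
    · simp [f, Function.update, h]
  have key : ∀ b : Fin d → Bool,
      (∑ e : ZMod m,
        (((1 : ℝ) / 2) ^ d * noiseDist m η e) *
          (if (∀ j ∈ S, (if (f b) j then Δ else 0) = us j) ∧
              0 + (∑ j : Fin d, (if (f b) j then Δ else 0)) + e = y
           then 1 else 0)) =
      (∑ e : ZMod m,
        (((1 : ℝ) / 2) ^ d * noiseDist m η e) *
          (if (∀ j ∈ S, (if b j then Δ else 0) = us j) ∧
              Δ + (∑ j : Fin d, (if b j then Δ else 0)) + e = y
           then 1 else 0)) := by
    intro b
    apply Finset.sum_congr rfl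
    intro e _
    congr 1
    have hSame : ∀ j ∈ S, (if (f b) j then Δ else 0) = (if b j then Δ else 0) := by
      intro j hj
      have : j ≠ j₀ := fun h => hj₀ (h ▸ hj)
      simp [f, Function.update, this]
    have hSum : (∑ j : Fin d, (if (f b) j then Δ else 0)) =
        Δ + ∑ j : Fin d, (if b j then Δ else 0) := by
      rw [← Finset.sum_erase_add _ _ (Finset.mem_univ j₀),
        ← Finset.sum_erase_add _ (fun j => if b j then Δ else 0) (Finset.mem_univ j₀)]
      have h1 : (∑ j ∈ Finset.univ.erase j₀, (if (f b) j then Δ else 0)) =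
          ∑ j ∈ Finset.univ.erase j₀, (if b j then Δ else 0) := by
        apply Finset.sum_congr rfl
        intro j hj
        have : j ≠ j₀ := (Finset.mem_erase.mp hj).1
        simp [f, Function.update, this]
      have h2 : (if (f b) j₀ then Δ else 0) = Δ + (if b j₀ then Δ else 0) := by
        simp only [f, Function.update_self]
        cases b j₀ <;> simp [hΔΔ]
      rw [h1, h2]
      ring
    have hcond : ((∀ j ∈ S, (if (f b) j then Δ else 0) = us j) ∧
        0 + (∑ j : Fin d, (if (f b) j then Δ else 0)) + e = y) ↔
        ((∀ j ∈ S, (if b j then Δ else 0) = us j) ∧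
        Δ + (∑ j : Fin d, (if b j then Δ else 0)) + e = y) := by
      constructor
      · rintro ⟨h1, h2⟩
        refine ⟨fun j hj => (hSame j hj) ▸ h1 j hj, ?_⟩
        rw [hSum] at h2
        rw [← h2]; ring
      · rintro ⟨h1, h2⟩
        refine ⟨fun j hj => (hSame j hj) ▸ h1 j hj, ?_⟩
        rw [hSum, ← h2]; ring
    simp only [hcond]
  unfold jointProb
  rw [← Function.Bijective.sum_comp hf.bijective]
  exact Finset.sum_congr rfl fun b _ => key b
end

section
/- Let m ≥ 4 be an even integer and η ∈ (0,1/2), and set B := 2·√((1−η)·η/(m−1)) + (m−2)·η/(m−1). Then B < 1, and consequently κ := −log B > 0. Moreover, for P the distribution on ℤ/mℤ with P(0) = 1−η and P(a) = η/(m−1) for a ≠ 0, and Q(z) := P(z − Δ) with Δ := m/2, the Chernoff information satisfies C(P,Q) ≥ −log B > 0. -/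
open Finset

/-- For `m ≥ 4` even and `η ∈ (0,1/2)`, the quantity
`B = 2√((1−η)·η/(m−1)) + (m−2)·η/(m−1)` satisfies `B < 1` (so `κ := −log B > 0`), and
for `P = noiseDist m η` and `Q` its shift by `Δ = m/2`, the Chernoff information
satisfies `C(P,Q) ≥ −log B > 0`. -/
theorem chernoff_info_positive_for_shifted_noise
    (m : ℕ) [NeZero m] (hm : 4 ≤ m) (hme : Even m)
    (η : ℝ) (hη : η ∈ Set.Ioo (0 : ℝ) (1 / 2)) :
    (2 * Real.sqrt ((1 - η) * η / ((m : ℝ) - 1)) + ((m : ℝ) - 2) * η / ((m : ℝ) - 1)) < 1 ∧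
    0 < -Real.log
        (2 * Real.sqrt ((1 - η) * η / ((m : ℝ) - 1)) + ((m : ℝ) - 2) * η / ((m : ℝ) - 1)) ∧
    -Real.log
        (2 * Real.sqrt ((1 - η) * η / ((m : ℝ) - 1)) + ((m : ℝ) - 2) * η / ((m : ℝ) - 1))
      ≤ chernoffInfo (noiseDist m η)
          (fun z => noiseDist m η (z - ((m / 2 : ℕ) : ZMod m))) := by
  obtain ⟨hη0, hη2⟩ := hη
  have hmn : (4:ℝ) ≤ (m:ℝ) := by exact_mod_cast hm
  set n : ℝ := (m:ℝ) with hn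
  have hn1 : (3:ℝ) ≤ n - 1 := by linarith
  have hc : 0 < η / (n - 1) := div_pos hη0 (by linarith)
  set c : ℝ := η / (n - 1) with hcdef
  have h1η : (0:ℝ) < 1 - η := by linarith
  set a := Real.sqrt (1 - η) with hadef
  set b := Real.sqrt c with hbdef
  have ha2 : a ^ 2 = 1 - η := Real.sq_sqrt h1η.le
  have hb2 : b ^ 2 = c := Real.sq_sqrt hc.le
  have ha0 : 0 ≤ a := Real.sqrt_nonneg _
  have hb0 : 0 ≤ b := Real.sqrt_nonneg _
  have hA : Real.sqrt ((1 - η) * η / (n - 1)) = a * b := by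
    rw [mul_div_assoc, Real.sqrt_mul h1η.le]
  have hclt : c < 1/2 := by
    rw [hcdef, div_lt_iff₀ (by linarith : (0:ℝ) < n - 1)]
    nlinarith
  have hab : a ≠ b := by
    intro h
    have : (1:ℝ) - η = c := by rw [← ha2, ← hb2, h]
    linarith
  have hsq : 0 < (a - b) ^ 2 := by
    have := sub_ne_zero.mpr hab
    positivity
  have hηc : (n - 1) * c = η := by
    have hn1' : n - 1 ≠ 0 := by linarith
    rw [hcdef, mul_div_assoc']; exact mul_div_cancel_left₀ η hn1'
  set B : ℝ := 2 * Real.sqrt ((1 - η) * η / (n - 1)) + (n - 2) * η / (n - 1) with hBdef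
  have hBval : B = 2 * (a * b) + (n - 2) * c := by
    rw [hBdef, hA, hcdef]; ring
  have hB1 : B < 1 := by
    rw [hBval]; nlinarith
  have hB0 : 0 < B := by
    rw [hBval]
    have : 0 < (n - 2) * c := mul_pos (by linarith) hc
    nlinarith
  refine ⟨hB1, neg_pos.mpr (Real.log_neg hB0 hB1), ?_⟩
  -- main part
  set Δ : ZMod m := ((m / 2 : ℕ) : ZMod m) with hΔdef
  have hΔ0 : Δ ≠ 0 := by
    rw [hΔdef, Ne, ZMod.natCast_eq_zero_iff]
    intro hdvd
    have h1 : m / 2 < m := Nat.div_lt_self (by omega) one_lt_two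
    have h2 : m ≤ m / 2 := Nat.le_of_dvd (by omega) hdvd
    omega
  have hPpos : ∀ z : ZMod m, 0 < noiseDist m η z := by
    intro z
    unfold noiseDist
    split
    · linarith
    · exact hc
  set S : Set ℝ :=
    ((fun s : ℝ => ∑ z : ZMod m, noiseDist m η z ^ (1 - s) * noiseDist m η (z - Δ) ^ s) ''
      Set.Ioo 0 1) with hSdef
  set c₀ : ℝ := min (1 - η) c with hc₀def
  have hc₀pos : 0 < c₀ := lt_min h1η hc
  have hlb : ∀ x ∈ S, c₀ ≤ x := by
    rintro x ⟨s, ⟨hs0, hs1⟩, rfl⟩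
    have hterm0 : noiseDist m η (0 : ZMod m) ^ (1 - s) *
        noiseDist m η ((0 : ZMod m) - Δ) ^ s = (1 - η) ^ (1 - s) * c ^ s := by
      have h1 : noiseDist m η (0 : ZMod m) = 1 - η := by simp [noiseDist]
      have h2 : noiseDist m η ((0 : ZMod m) - Δ) = c := by
        have h3 : (0 : ZMod m) - Δ ≠ 0 := by
          simpa [neg_eq_zero] using hΔ0
        unfold noiseDist
        rw [if_neg h3]
      rw [h1, h2]
    have hge : c₀ ≤ (1 - η) ^ (1 - s) * c ^ s := by
      have e1 : c₀ ^ (1 - s) * c₀ ^ s = c₀ := by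
        rw [← Real.rpow_add hc₀pos]
        norm_num
      calc c₀ = c₀ ^ (1 - s) * c₀ ^ s := e1.symm
        _ ≤ (1 - η) ^ (1 - s) * c ^ s := by
            apply mul_le_mul
            · exact Real.rpow_le_rpow hc₀pos.le (min_le_left _ _) (by linarith)
            · exact Real.rpow_le_rpow hc₀pos.le (min_le_right _ _) hs0.le
            · exact Real.rpow_nonneg hc₀pos.le _
            · exact Real.rpow_nonneg (by linarith) _
    calc c₀ ≤ noiseDist m η (0 : ZMod m) ^ (1 - s) * noiseDist m η ((0 : ZMod m) - Δ) ^ s := by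
          rw [hterm0]; exact hge
      _ ≤ ∑ z : ZMod m, noiseDist m η z ^ (1 - s) * noiseDist m η (z - Δ) ^ s := by
          apply Finset.single_le_sum (f := fun z : ZMod m =>
            noiseDist m η z ^ (1 - s) * noiseDist m η (z - Δ) ^ s)
          · intro i _
            exact mul_nonneg (Real.rpow_nonneg (hPpos i).le _) (Real.rpow_nonneg (hPpos _).le _)
          · exact Finset.mem_univ _
  have hne : S.Nonempty := ⟨_, ⟨(1:ℝ)/2, by constructor <;> norm_num, rfl⟩⟩
  have hbdd : BddBelow S := ⟨c₀, hlb⟩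
  -- B is attained at s = 1/2
  have hBmem : B ∈ S := by
    refine ⟨(1:ℝ)/2, by constructor <;> norm_num, ?_⟩
    have hterm : ∀ z : ZMod m,
        noiseDist m η z ^ (1 - (1:ℝ)/2) * noiseDist m η (z - Δ) ^ ((1:ℝ)/2) =
        c + (if z = 0 then a * b - c else 0) + (if z = Δ then a * b - c else 0) := by
      intro z
      have hhalf : (1 : ℝ) - 1/2 = 1/2 := by norm_num
      rw [hhalf]
      have hsub : z - Δ = 0 ↔ z = Δ := sub_eq_zero
      rcases eq_or_ne z 0 with hz | hz
      · subst hz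
        have hzΔ : (0 : ZMod m) ≠ Δ := fun h => hΔ0 h.symm
        have h2 : (0 : ZMod m) - Δ ≠ 0 := by simpa [neg_eq_zero] using hΔ0
        simp only [noiseDist, if_pos rfl, if_neg h2, if_neg hzΔ, eq_self_iff_true, if_true, ← hcdef]
        rw [hadef, hbdef, Real.sqrt_eq_rpow, Real.sqrt_eq_rpow]
        ring
      · rcases eq_or_ne z Δ with hzΔ | hzΔ
        · subst hzΔ
          have h2 : Δ - Δ = 0 := sub_self Δ
          simp only [noiseDist, if_neg hz, h2, eq_self_iff_true, if_true, ← hcdef]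
          rw [hadef, hbdef, Real.sqrt_eq_rpow, Real.sqrt_eq_rpow]
          ring
        · have h2 : z - Δ ≠ 0 := fun h => hzΔ (hsub.mp h)
          simp only [noiseDist, if_neg hz, if_neg h2, if_neg hzΔ, eq_self_iff_true, if_true, ← hcdef]
          rw [← Real.rpow_add hc]
          norm_num
    simp only [hterm]
    rw [Finset.sum_add_distrib, Finset.sum_add_distrib, Finset.sum_const,
      Finset.sum_ite_eq' Finset.univ (0 : ZMod m) (fun _ => a * b - c),
      Finset.sum_ite_eq' Finset.univ Δ (fun _ => a * b - c)]
    simp only [Finset.mem_univ, if_pos, Finset.card_univ, ZMod.card, nsmul_eq_mul]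
    rw [hBval]
    ring
  have hInf_le : sInf S ≤ B := csInf_le hbdd hBmem
  have hInf_pos : 0 < sInf S := lt_of_lt_of_le hc₀pos (le_csInf hne hlb)
  have hlog : Real.log (sInf S) ≤ Real.log B := Real.log_le_log hInf_pos hInf_le
  unfold chernoffInfo
  rw [← hSdef]
  linarith
end
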